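/- arXiv:1810.00328 — 6 statements merged into one kernel-verified Lean document; each statement's English description precedes it below -/
import Mathlib

section
/- Let F ∈ ℂ[x₁,…,xₙ] be a homogeneous form of degree d > 1 that is irreducible over ℂ, and suppose that for indices i ≠ j the mixed second partial derivative ∂²F/∂xᵢ∂xⱼ is identically zero, while xᵢ·∂²F/∂xᵢ² + ∂F/∂xᵢ and xⱼ·∂²F/∂xⱼ² + ∂F/∂xⱼ are both non-zero polynomials. Then F does not divide the polynomial 𝔊_{i,j}(x) = (xᵢ·∂²F/∂xᵢ²(x) + ∂F/∂xᵢ(x))·(xⱼ·∂²F/∂xⱼ²(x) + ∂F/∂xⱼ(x)) − xᵢxⱼ·(∂²F/∂xᵢ∂xⱼ(x))². -/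
/-!
Once `∂²F/∂xᵢ∂xⱼ = 0`, the polynomial `𝔊_{i,j}` is the product of the two non-zero forms
`xₖ·∂²F/∂xₖ² + ∂F/∂xₖ = ∂(xₖ·∂F/∂xₖ)/∂xₖ` (`k = i, j`) of degree `d - 1`. An irreducible `F` is
prime, so it would divide one of them, which its degree `d` forbids.
-/

open MvPolynomial

namespace MvPolynomial

variable {σ R : Type*} [CommRing R]

lemma pderiv_X_mul_pderiv (i : σ) (F : MvPolynomial σ R) :
    pderiv i (X i * pderiv i F) = X i * pderiv i (pderiv i F) + pderiv i F := by
  rw [Derivation.leibniz, pderiv_X_self, smul_eq_mul, smul_eq_mul, mul_one]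

lemma IsHomogeneous.X_mul_pderiv_pderiv_add_pderiv {F : MvPolynomial σ R} {d : ℕ}
    (hF : F.IsHomogeneous d) (i : σ) :
    (X i * pderiv i (pderiv i F) + pderiv i F).IsHomogeneous (d - 1) := by
  rw [← pderiv_X_mul_pderiv]
  simpa using ((isHomogeneous_X R i).mul hF.pderiv).pderiv (i := i)

lemma IsHomogeneous.not_dvd_of_totalDegree_lt [IsDomain R] {F A : MvPolynomial σ R} {d : ℕ}
    (hF : F.IsHomogeneous d) (hF0 : F ≠ 0) (hA0 : A ≠ 0) (hA : A.totalDegree < d) :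
    ¬ F ∣ A := fun hdvd ↦ by
  have := totalDegree_le_of_dvd_of_isDomain hdvd hA0
  rw [hF.totalDegree hF0] at this
  omega

end MvPolynomial

theorem stmt3_general (n d : ℕ) (F : MvPolynomial (Fin n) ℂ) (i j : Fin n)
    (hd : 1 < d) (hF : F.IsHomogeneous d) (hirr : Irreducible F)
    (hmixed : pderiv i (pderiv j F) = 0)
    (hi : X i * pderiv i (pderiv i F) + pderiv i F ≠ 0)
    (hj : X j * pderiv j (pderiv j F) + pderiv j F ≠ 0) :
    ¬ F ∣ ((X i * pderiv i (pderiv i F) + pderiv i F) *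
            (X j * pderiv j (pderiv j F) + pderiv j F) -
          X i * X j * (pderiv i (pderiv j F)) ^ 2) := by
  rw [hmixed, zero_pow two_ne_zero, mul_zero, sub_zero]
  have not_dvd_factor (k : Fin n) (hk : X k * pderiv k (pderiv k F) + pderiv k F ≠ 0) :
      ¬ F ∣ X k * pderiv k (pderiv k F) + pderiv k F :=
    hF.not_dvd_of_totalDegree_lt hirr.ne_zero hk
      ((hF.X_mul_pderiv_pderiv_add_pderiv k).totalDegree_le.trans_lt (by omega))
  intro hdvd
  rcases hirr.prime.dvd_or_dvd hdvd with h | h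
  · exact not_dvd_factor i hi h
  · exact not_dvd_factor j hj h

/-- For an irreducible homogeneous form `F` of degree `d > 1` over `ℂ` with
vanishing mixed partial `∂²F/∂xᵢ∂xⱼ ≡ 0` and with `xᵢ·∂²F/∂xᵢ² + ∂F/∂xᵢ` and
`xⱼ·∂²F/∂xⱼ² + ∂F/∂xⱼ` both non-zero, `F` does not divide
`𝔊_{i,j} = (xᵢ·∂²F/∂xᵢ² + ∂F/∂xᵢ)(xⱼ·∂²F/∂xⱼ² + ∂F/∂xⱼ) − xᵢxⱼ(∂²F/∂xᵢ∂xⱼ)²`. -/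
theorem stmt3 (n d : ℕ) (F : MvPolynomial (Fin n) ℂ) (i j : Fin n)
    (hd : 1 < d) (hF : F.IsHomogeneous d) (hirr : Irreducible F) (hij : i ≠ j)
    (hmixed : pderiv i (pderiv j F) = 0)
    (hi : X i * pderiv i (pderiv i F) + pderiv i F ≠ 0)
    (hj : X j * pderiv j (pderiv j F) + pderiv j F ≠ 0) :
    ¬ F ∣ ((X i * pderiv i (pderiv i F) + pderiv i F) *
            (X j * pderiv j (pderiv j F) + pderiv j F) -
          X i * X j * (pderiv i (pderiv j F)) ^ 2) :=
  stmt3_general n d F i j hd hF hirr hmixed hi hj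
end

section
/- Let 𝔉 : ℝⁿ → ℝⁿ be differentiable on a bounded convex open set W, let x₀ ∈ W with A = Jac 𝔉(x₀) invertible, and suppose |∂𝔉ᵢ/∂xⱼ(x) − ∂𝔉ᵢ/∂xⱼ(x₀)| < M for all x ∈ W and all 1 ≤ i,j ≤ n, where 0 < M < |det A|/(n·n!·a_max^{n−1}) and a_max is the maximum absolute value of the entries of A. Then for all x₁, x₂ ∈ W, ‖x₁ − x₂‖ ≤ (n!·a_max^{n−1}/(|det A| − n·M·n!·a_max^{n−1}))·‖𝔉(x₁) − 𝔉(x₂)‖. In particular 𝔉 is injective on W. -/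
open Matrix

/-!
Write `𝔉 = A + (𝔉 - A)` with `A = Jac 𝔉(x₀)`. An `n × n` matrix whose entries are bounded by `c`
has Euclidean operator norm at most `n c`, so by the mean value inequality on the convex set `W`
the perturbation `𝔉 - A` is `n M`-Lipschitz there. Conversely `A⁻¹ = adj A / det A`, and expanding
the minors over permutations bounds the entries of `adj A` by `(n-1)! a_max^(n-1)`, whence
`|det A| ‖v‖ ≤ n! a_max^(n-1) ‖A v‖`. The Lipschitz perturbation is absorbed as soon as
`n M n! a_max^(n-1) < |det A|`.
-/

theorem Matrix.norm_toEuclideanCLM_le {ι : Type*} [Fintype ι] [DecidableEq ι]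
    (B : Matrix ι ι ℝ) {c : ℝ} (h : ∀ i j, |B i j| ≤ c) :
    ‖toEuclideanCLM (𝕜 := ℝ) B‖ ≤ Fintype.card ι * c := by
  rcases isEmpty_or_nonempty ι with _ | ⟨⟨i₀⟩⟩
  · simp [ContinuousLinearMap.opNorm_subsingleton]
  have hc : 0 ≤ c := (abs_nonneg _).trans (h i₀ i₀)
  refine ContinuousLinearMap.opNorm_le_bound _ (by positivity) fun x => ?_
  have hrow : ∀ i, ∑ j, B i j ^ 2 ≤ Fintype.card ι * c ^ 2 := fun i => by
    calc ∑ j, B i j ^ 2 ≤ ∑ _j : ι, c ^ 2 :=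
          Finset.sum_le_sum fun j _ => sq_le_sq' (abs_le.1 (h i j)).1 (abs_le.1 (h i j)).2
      _ = Fintype.card ι * c ^ 2 := by simp
  refine le_of_sq_le_sq ?_ (by positivity)
  calc ‖toEuclideanCLM (𝕜 := ℝ) B x‖ ^ 2 = ∑ i, (∑ j, B i j * x j) ^ 2 := by
        simp [EuclideanSpace.norm_sq_eq, mulVec, dotProduct]
    _ ≤ ∑ i, (∑ j, B i j ^ 2) * ∑ j, x j ^ 2 :=
        Finset.sum_le_sum fun i _ => Finset.sum_mul_sq_le_sq_mul_sq _ _ _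
    _ ≤ ∑ _i : ι, (Fintype.card ι * c ^ 2) * ‖x‖ ^ 2 := by
        refine Finset.sum_le_sum fun i _ => ?_
        rw [EuclideanSpace.norm_sq_eq]
        simpa using mul_le_mul_of_nonneg_right (hrow i) (by positivity)
    _ = (Fintype.card ι * c * ‖x‖) ^ 2 := by simp; ring

theorem Matrix.abs_inv_apply_le {k : ℕ} (B : Matrix (Fin (k + 1)) (Fin (k + 1)) ℝ) {a : ℝ}
    (h : ∀ i j, |B i j| ≤ a) (i j : Fin (k + 1)) :
    |B⁻¹ i j| ≤ k.factorial * a ^ k / |B.det| := by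
  have hadj : |B.adjugate i j| ≤ k.factorial * a ^ k := by
    rw [adjugate_fin_succ_eq_det_submatrix, abs_mul, abs_pow, abs_neg, abs_one, one_pow, one_mul]
    simpa using det_le (A := B.submatrix j.succAbove i.succAbove) (abv := AbsoluteValue.abs)
      fun _ _ => h _ _
  rw [inv_def, smul_apply, smul_eq_mul, abs_mul, Ring.inverse_eq_inv', abs_inv, div_eq_inv_mul]
  exact mul_le_mul_of_nonneg_left hadj (by positivity)

theorem Matrix.abs_det_mul_norm_le {k : ℕ} (B : Matrix (Fin (k + 1)) (Fin (k + 1)) ℝ)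
    (hB : IsUnit B) {a : ℝ} (h : ∀ i j, |B i j| ≤ a) (v : EuclideanSpace ℝ (Fin (k + 1))) :
    |B.det| * ‖v‖ ≤ (k + 1).factorial * a ^ k * ‖toEuclideanCLM (𝕜 := ℝ) B v‖ := by
  have hdet : IsUnit B.det := (isUnit_iff_isUnit_det B).1 hB
  have hd : |B.det| ≠ 0 := abs_ne_zero.2 hdet.ne_zero
  have hinv : ‖toEuclideanCLM (𝕜 := ℝ) B⁻¹‖ ≤ (k + 1).factorial * a ^ k / |B.det| := by
    rw [Nat.factorial_succ]
    simpa [mul_div_assoc, mul_assoc] using norm_toEuclideanCLM_le B⁻¹ (B.abs_inv_apply_le h)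
  have hv : ‖v‖ ≤ ‖toEuclideanCLM (𝕜 := ℝ) B⁻¹‖ * ‖toEuclideanCLM (𝕜 := ℝ) B v‖ := by
    calc ‖v‖ = ‖toEuclideanCLM (𝕜 := ℝ) B⁻¹ (toEuclideanCLM (𝕜 := ℝ) B v)‖ := by
          rw [← mul_apply_eq_comp, ← map_mul, nonsing_inv_mul B hdet, map_one, one_apply_eq_self]
      _ ≤ _ := ContinuousLinearMap.le_opNorm _ _
  calc |B.det| * ‖v‖
      ≤ |B.det| * ((k + 1).factorial * a ^ k / |B.det| * ‖toEuclideanCLM (𝕜 := ℝ) B v‖) := by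
        gcongr
        exact hv.trans (by gcongr)
    _ = (k + 1).factorial * a ^ k * ‖toEuclideanCLM (𝕜 := ℝ) B v‖ := by
        field_simp

theorem norm_le_div_mul_norm_of_norm_sub_le {E F : Type*} [SeminormedAddCommGroup E]
    [SeminormedAddCommGroup F] {u : E} {w z : F} {d P L : ℝ} (hP : 0 ≤ P) (hLP : L * P < d)
    (hz : d * ‖u‖ ≤ P * ‖z‖) (hwz : ‖w - z‖ ≤ L * ‖u‖) :
    ‖u‖ ≤ P / (d - L * P) * ‖w‖ := by
  have hz' : ‖z‖ ≤ ‖w‖ + L * ‖u‖ := by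
    linarith [norm_le_norm_add_norm_sub' z w, norm_sub_rev z w]
  rw [div_mul_eq_mul_div, le_div_iff₀ (sub_pos.2 hLP)]
  nlinarith [mul_le_mul_of_nonneg_left hz' hP]

theorem stmt4_general (n : ℕ)
    (𝔉 : EuclideanSpace ℝ (Fin n) → EuclideanSpace ℝ (Fin n))
    (J : EuclideanSpace ℝ (Fin n) → Matrix (Fin n) (Fin n) ℝ)
    (W : Set (EuclideanSpace ℝ (Fin n))) (x₀ : EuclideanSpace ℝ (Fin n))
    (hWc : Convex ℝ W)
    (hderiv : ∀ x ∈ W, HasFDerivAt 𝔉 (Matrix.toEuclideanCLM (𝕜 := ℝ) (J x)) x)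
    (hA : IsUnit (J x₀)) (amax M : ℝ)
    (hamax : ∀ i j, |J x₀ i j| ≤ amax)
    (hM : M < |(J x₀).det| / (n * n.factorial * amax ^ (n - 1)))
    (hclose : ∀ x ∈ W, ∀ i j, |J x i j - J x₀ i j| < M) :
    (∀ x₁ ∈ W, ∀ x₂ ∈ W,
        ‖x₁ - x₂‖ ≤ (n.factorial * amax ^ (n - 1) /
            (|(J x₀).det| - n * M * n.factorial * amax ^ (n - 1))) * ‖𝔉 x₁ - 𝔉 x₂‖) ∧
      Set.InjOn 𝔉 W := by
  rcases n with _ | k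
  · exact ⟨fun x₁ _ x₂ _ => by simp [Subsingleton.elim x₁ x₂],
      fun x₁ _ x₂ _ _ => Subsingleton.elim x₁ x₂⟩
  set A := J x₀
  have ha : 0 ≤ amax := (abs_nonneg _).trans (hamax 0 0)
  have hd : 0 < |A.det| := abs_pos.2 ((isUnit_iff_isUnit_det A).1 hA).ne_zero
  have hlin : ∀ x₁ ∈ W, ∀ x₂ ∈ W, ‖𝔉 x₁ - 𝔉 x₂ - toEuclideanCLM (𝕜 := ℝ) A (x₁ - x₂)‖ ≤
      (k + 1) * M * ‖x₁ - x₂‖ := fun x₁ h₁ x₂ h₂ =>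
    hWc.norm_image_sub_le_of_norm_hasFDerivWithin_le' (fun x hx => (hderiv x hx).hasFDerivWithinAt)
      (fun x hx => by
        rw [← map_sub]
        simpa using norm_toEuclideanCLM_le (J x - A) fun i j => (hclose x hx i j).le)
      h₂ h₁
  have hLP : (k + 1) * M * ((k + 1).factorial * amax ^ k) < |A.det| := by
    rw [show (k + 1) * M * ((k + 1).factorial * amax ^ k) =
      M * ((k + 1) * (k + 1).factorial * amax ^ k) by ring]
    rcases (show (0 : ℝ) ≤ (k + 1) * (k + 1).factorial * amax ^ k by positivity).eq_or_lt
      with hD | hD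
    · rwa [← hD, mul_zero]
    · exact (lt_div_iff₀ hD).1 (by simpa using hM)
  have hbound : ∀ x₁ ∈ W, ∀ x₂ ∈ W, ‖x₁ - x₂‖ ≤ (k + 1).factorial * amax ^ k /
      (|A.det| - (k + 1) * M * ((k + 1).factorial * amax ^ k)) * ‖𝔉 x₁ - 𝔉 x₂‖ :=
    fun x₁ h₁ x₂ h₂ => norm_le_div_mul_norm_of_norm_sub_le (by positivity) hLP
      (A.abs_det_mul_norm_le hA hamax _) (hlin x₁ h₁ x₂ h₂)
  refine ⟨by simpa [mul_assoc] using hbound, fun x₁ h₁ x₂ h₂ h => ?_⟩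
  simpa [h, sub_eq_zero] using hbound x₁ h₁ x₂ h₂

/-- Quantitative injectivity step of the explicit inverse function theorem:
if `𝔉` is differentiable on a bounded convex open set `W` with Jacobian matrices `J x`,
`A = J x₀` is invertible, `amax` is the maximum absolute value of the entries of `A`, and
all entries of `J x` are within `M < |det A|/(n·n!·amax^{n-1})` of those of `A` on `W`, then
`‖x₁ − x₂‖ ≤ (n!·amax^{n-1}/(|det A| − n·M·n!·amax^{n-1}))·‖𝔉 x₁ − 𝔉 x₂‖` on `W`;
in particular `𝔉` is injective on `W`. -/
theorem stmt4 (n : ℕ)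
    (𝔉 : EuclideanSpace ℝ (Fin n) → EuclideanSpace ℝ (Fin n))
    (J : EuclideanSpace ℝ (Fin n) → Matrix (Fin n) (Fin n) ℝ)
    (W : Set (EuclideanSpace ℝ (Fin n))) (x₀ : EuclideanSpace ℝ (Fin n))
    (hWo : IsOpen W) (hWc : Convex ℝ W) (hWb : Bornology.IsBounded W) (hx₀ : x₀ ∈ W)
    (hderiv : ∀ x ∈ W, HasFDerivAt 𝔉 (Matrix.toEuclideanCLM (𝕜 := ℝ) (J x)) x)
    (hA : IsUnit (J x₀)) (amax M : ℝ)
    (hamax : ∀ i j, |J x₀ i j| ≤ amax) (hattain : ∃ i j, |J x₀ i j| = amax)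
    (hM0 : 0 < M)
    (hM : M < |(J x₀).det| / (n * n.factorial * amax ^ (n - 1)))
    (hclose : ∀ x ∈ W, ∀ i j, |J x i j - J x₀ i j| < M) :
    (∀ x₁ ∈ W, ∀ x₂ ∈ W,
        ‖x₁ - x₂‖ ≤ (n.factorial * amax ^ (n - 1) /
            (|(J x₀).det| - n * M * n.factorial * amax ^ (n - 1))) * ‖𝔉 x₁ - 𝔉 x₂‖) ∧
      Set.InjOn 𝔉 W :=
  stmt4_general n 𝔉 J W x₀ hWc hderiv hA amax M hamax hM hclose
end

section
/- Let κ > 0 and let f : ℝ → ℝ be twice differentiable on (a − κ, b + κ) with |f′(t)| ≥ c₁ > 0 and |f″(t)| ≤ c₂ for all t ∈ [a, b]. Let ψ : ℝ → ℝ be smooth with support contained in [a + κ, b − κ]. Then for every real τ ≠ 0, |∫_a^b ψ(t)·e^{iτf(t)} dt| ≤ (1/|τ|)·(2(b−a)/c₁ + (b−a)²·c₂/c₁²)·max_{x ∈ (a,b)} |ψ′(x)|. -/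
/-- First-derivative oscillatory integral estimate (case i of Lemma 5.1):
if `|f′| ≥ c₁ > 0` and `|f″| ≤ c₂` on `[a,b]`, `f` twice differentiable on `(a−κ,b+κ)`,
and `ψ` is smooth with support in `[a+κ, b−κ]`, then for `τ ≠ 0`,
`|∫_a^b ψ(t)e^{iτf(t)}dt| ≤ (1/|τ|)(2(b−a)/c₁ + (b−a)²c₂/c₁²)·max_{(a,b)}|ψ′|`. -/
theorem stmt5 (a b κ c₁ c₂ τ Mψ : ℝ) (f f' f'' ψ : ℝ → ℝ)
    (hκ : 0 < κ) (hab : a < b)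
    (hf' : ∀ t ∈ Set.Ioo (a - κ) (b + κ), HasDerivAt f (f' t) t)
    (hf'' : ∀ t ∈ Set.Ioo (a - κ) (b + κ), HasDerivAt f' (f'' t) t)
    (hc₁ : 0 < c₁) (hlow : ∀ t ∈ Set.Icc a b, c₁ ≤ |f' t|)
    (hup : ∀ t ∈ Set.Icc a b, |f'' t| ≤ c₂)
    (hψ : ContDiff ℝ (⊤ : ℕ∞) ψ)
    (hsupp : Function.support ψ ⊆ Set.Icc (a + κ) (b - κ))
    (hMψ : ∀ x ∈ Set.Ioo a b, |deriv ψ x| ≤ Mψ)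
    (hτ : τ ≠ 0) :
    ‖∫ t in a..b, (ψ t : ℂ) * Complex.exp (Complex.I * Complex.ofReal (τ * f t))‖ ≤
      (1 / |τ|) * (2 * (b - a) / c₁ + (b - a) ^ 2 * c₂ / c₁ ^ 2) * Mψ := by
  have hMψ0 : 0 ≤ Mψ :=
    le_trans (abs_nonneg _) (hMψ ((a + b) / 2) ⟨by linarith, by linarith⟩)
  have hψ0 : ∀ x, x ∉ Set.Icc (a + κ) (b - κ) → ψ x = 0 := fun x hx =>
    Function.notMem_support.mp fun h => hx (hsupp h)
  have hψa : ψ a = 0 := hψ0 a (fun h => by have := h.1; linarith)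
  have hψb : ψ b = 0 := hψ0 b (fun h => by have := h.2; linarith)
  have hderivb : deriv ψ b = 0 := by
    have hev : ψ =ᶠ[nhds b] (fun _ => 0) := by
      filter_upwards [Ioi_mem_nhds (show b - κ < b by linarith)] with x hx
      exact hψ0 x (fun hmem => by simp only [Set.mem_Ioi] at hx; linarith [hmem.2])
    rw [hev.deriv_eq, deriv_const]
  have hM' : ∀ x ∈ Set.Ioc a b, |deriv ψ x| ≤ Mψ := by
    intro x hx
    rcases hx.2.lt_or_eq with h | h
    · exact hMψ x ⟨hx.1, h⟩
    · rw [h, hderivb]; simpa using hMψ0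
  have hdiffψ := hψ.differentiable (by simp)
  have hψ'cont : Continuous (deriv ψ) := hψ.continuous_deriv (by simp)
  -- bound on ψ itself
  have hψbound : ∀ t ∈ Set.Icc a b, |ψ t| ≤ (b - a) * Mψ := by
    intro t ht
    have hFTC : ∫ y in a..t, deriv ψ y = ψ t - ψ a :=
      intervalIntegral.integral_deriv_eq_sub (fun x _ => hdiffψ x)
        (hψ'cont.intervalIntegrable a t)
    have hb : ‖∫ y in a..t, deriv ψ y‖ ≤ Mψ * |t - a| := by
      apply intervalIntegral.norm_integral_le_of_norm_le_const
      intro x hx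
      rw [Set.uIoc_of_le ht.1] at hx
      simpa [Real.norm_eq_abs] using hM' x ⟨hx.1, le_trans hx.2 ht.2⟩
    rw [hFTC, hψa, sub_zero, Real.norm_eq_abs] at hb
    calc |ψ t| ≤ Mψ * |t - a| := hb
      _ ≤ (b - a) * Mψ := by
          rw [abs_of_nonneg (by linarith [ht.1])]
          nlinarith [ht.1, ht.2]
  have hJ : Set.Icc a b ⊆ Set.Ioo (a - κ) (b + κ) := fun t ht =>
    ⟨by linarith [ht.1], by linarith [ht.2]⟩
  have hτC : (Complex.I * (τ : ℂ)) ≠ 0 :=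
    mul_ne_zero Complex.I_ne_zero (Complex.ofReal_ne_zero.mpr hτ)
  have hf'ne : ∀ t ∈ Set.Icc a b, f' t ≠ 0 := fun t ht h => by
    have := hlow t ht; rw [h, abs_zero] at this; linarith
  set u : ℝ → ℂ := fun t => ((ψ t : ℂ) / (f' t : ℂ)) * (Complex.I * (τ : ℂ))⁻¹ with hu_def
  set u' : ℝ → ℂ := fun t =>
    (((deriv ψ t * f' t - ψ t * f'' t) / (f' t) ^ 2 : ℝ) : ℂ) * (Complex.I * (τ : ℂ))⁻¹
    with hu'_def
  set v : ℝ → ℂ := fun t => Complex.exp (Complex.I * ((τ * f t : ℝ) : ℂ)) with hv_def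
  set v' : ℝ → ℂ := fun t =>
    Complex.exp (Complex.I * ((τ * f t : ℝ) : ℂ)) * (Complex.I * ((τ * f' t : ℝ) : ℂ))
    with hv'_def
  have huIcc : Set.uIcc a b = Set.Icc a b := Set.uIcc_of_le hab.le
  have hu_deriv : ∀ x ∈ Set.uIcc a b, HasDerivAt u (u' x) x := by
    intro x hx
    rw [huIcc] at hx
    have h1 : HasDerivAt (fun s => ψ s / f' s)
        ((deriv ψ x * f' x - ψ x * f'' x) / (f' x) ^ 2) x :=
      (hdiffψ x).hasDerivAt.div (hf'' x (hJ hx)) (hf'ne x hx)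
    have h2 := h1.ofReal_comp.mul_const ((Complex.I * (τ : ℂ))⁻¹)
    convert h2 using 2 with s
    · rfl
    simp [u, Complex.ofReal_div]
  have hv_deriv : ∀ x ∈ Set.uIcc a b, HasDerivAt v (v' x) x := by
    intro x hx
    rw [huIcc] at hx
    have h1 : HasDerivAt (fun s => τ * f s) (τ * f' x) x := (hf' x (hJ hx)).const_mul τ
    exact (h1.ofReal_comp.const_mul Complex.I).cexp
  have hf'contOn : ContinuousOn f' (Set.Icc a b) := fun t ht =>
    ((hf'' t (hJ ht)).continuousAt).continuousWithinAt
  have hfcontOn : ContinuousOn f (Set.Icc a b) := fun t ht =>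
    ((hf' t (hJ ht)).continuousAt).continuousWithinAt
  have hv'int : IntervalIntegrable v' MeasureTheory.volume a b := by
    apply ContinuousOn.intervalIntegrable
    rw [huIcc]
    exact (Complex.continuous_exp.comp_continuousOn
        (continuousOn_const.mul (Complex.continuous_ofReal.comp_continuousOn
          (continuousOn_const.mul hfcontOn)))).mul
      (continuousOn_const.mul (Complex.continuous_ofReal.comp_continuousOn
          (continuousOn_const.mul hf'contOn)))
  -- the key pointwise bound on u'
  set C : ℝ := (Mψ / c₁ + (b - a) * Mψ * c₂ / c₁ ^ 2) * |τ|⁻¹ with hC_def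
  have hbound : ∀ t ∈ Set.Icc a b, ‖u' t‖ ≤ C := by
    intro t ht
    have hF : c₁ ≤ |f' t| := hlow t ht
    have hFpos : 0 < |f' t| := lt_of_lt_of_le hc₁ hF
    have hnorm : ‖u' t‖ = |(deriv ψ t * f' t - ψ t * f'' t) / (f' t) ^ 2| * |τ|⁻¹ := by
      rw [show u' t = (((deriv ψ t * f' t - ψ t * f'' t) / (f' t) ^ 2 : ℝ) : ℂ)
          * (Complex.I * (τ : ℂ))⁻¹ from rfl, norm_mul, norm_inv, norm_mul,
        Complex.norm_I, one_mul, Complex.norm_real, Complex.norm_real,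
        Real.norm_eq_abs, Real.norm_eq_abs]
    rw [hnorm]
    have hψ't : |deriv ψ t| ≤ Mψ := by
      rcases eq_or_lt_of_le ht.1 with h | h
      · have hev : ψ =ᶠ[nhds t] (fun _ => 0) := by
          filter_upwards [Iio_mem_nhds (show t < a + κ by rw [← h]; linarith)] with x hx
          exact hψ0 x (fun hmem => by simp only [Set.mem_Iio] at hx; linarith [hmem.1])
        rw [hev.deriv_eq, deriv_const, abs_zero]; exact hMψ0
      · exact hM' t ⟨h, ht.2⟩
    have hψt : |ψ t| ≤ (b - a) * Mψ := hψbound t ht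
    have hf''t : |f'' t| ≤ c₂ := hup t ht
    have hc₂0 : 0 ≤ c₂ := le_trans (abs_nonneg _) hf''t
    have hnum : |deriv ψ t * f' t - ψ t * f'' t| ≤ Mψ * |f' t| + (b - a) * Mψ * c₂ := by
      calc |deriv ψ t * f' t - ψ t * f'' t|
          ≤ |deriv ψ t * f' t| + |ψ t * f'' t| := abs_sub _ _
        _ = |deriv ψ t| * |f' t| + |ψ t| * |f'' t| := by rw [abs_mul, abs_mul]
        _ ≤ Mψ * |f' t| + (b - a) * Mψ * c₂ := by
            have h1 : |deriv ψ t| * |f' t| ≤ Mψ * |f' t| :=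
              mul_le_mul_of_nonneg_right hψ't hFpos.le
            have h2 : |ψ t| * |f'' t| ≤ (b - a) * Mψ * c₂ :=
              mul_le_mul hψt hf''t (abs_nonneg _) (by nlinarith)
            linarith
    have hdiv : |(deriv ψ t * f' t - ψ t * f'' t) / (f' t) ^ 2|
        ≤ Mψ / c₁ + (b - a) * Mψ * c₂ / c₁ ^ 2 := by
      rw [abs_div, abs_pow, div_le_iff₀ (by positivity)]
      have e1 : Mψ * |f' t| ≤ Mψ / c₁ * |f' t| ^ 2 := by
        rw [div_mul_eq_mul_div, le_div_iff₀ hc₁]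
        nlinarith [mul_le_mul_of_nonneg_left hF (mul_nonneg hMψ0 hFpos.le)]
      have e2 : (b - a) * Mψ * c₂ ≤ (b - a) * Mψ * c₂ / c₁ ^ 2 * |f' t| ^ 2 := by
        rw [div_mul_eq_mul_div, le_div_iff₀ (by positivity)]
        have hsq : c₁ ^ 2 ≤ |f' t| ^ 2 := by nlinarith
        nlinarith [mul_nonneg (mul_nonneg (by linarith : (0:ℝ) ≤ b - a) hMψ0) hc₂0]
      calc |deriv ψ t * f' t - ψ t * f'' t| ≤ Mψ * |f' t| + (b - a) * Mψ * c₂ := hnum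
        _ ≤ (Mψ / c₁ + (b - a) * Mψ * c₂ / c₁ ^ 2) * |f' t| ^ 2 := by
            rw [add_mul]; linarith
    exact mul_le_mul_of_nonneg_right hdiv (inv_nonneg.mpr (abs_nonneg τ))
  -- integrability of u'
  have hu'int : IntervalIntegrable u' MeasureTheory.volume a b := by
    rw [intervalIntegrable_iff, Set.uIoc_of_le hab.le]
    have hIocIcc : Set.Ioc a b ⊆ Set.Icc a b := Set.Ioc_subset_Icc_self
    have haef' : f' =ᵐ[MeasureTheory.volume.restrict (Set.Ioc a b)] deriv f := by
      filter_upwards [MeasureTheory.ae_restrict_mem measurableSet_Ioc] with x hx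
      exact ((hf' x (hJ (hIocIcc hx))).deriv).symm
    have haef'' : f'' =ᵐ[MeasureTheory.volume.restrict (Set.Ioc a b)] deriv f' := by
      filter_upwards [MeasureTheory.ae_restrict_mem measurableSet_Ioc] with x hx
      exact ((hf'' x (hJ (hIocIcc hx))).deriv).symm
    have hmf' : AEMeasurable f' (MeasureTheory.volume.restrict (Set.Ioc a b)) :=
      (measurable_deriv f).aemeasurable.congr haef'.symm
    have hmf'' : AEMeasurable f'' (MeasureTheory.volume.restrict (Set.Ioc a b)) :=
      (measurable_deriv f').aemeasurable.congr haef''.symm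
    have hr : AEMeasurable (fun t => (deriv ψ t * f' t - ψ t * f'' t) / (f' t) ^ 2)
        (MeasureTheory.volume.restrict (Set.Ioc a b)) :=
      ((hψ'cont.aemeasurable.mul hmf').sub (hψ.continuous.aemeasurable.mul hmf'')).div
        (hmf'.pow_const 2)
    have hmu' : MeasureTheory.AEStronglyMeasurable u'
        (MeasureTheory.volume.restrict (Set.Ioc a b)) :=
      ((Complex.measurable_ofReal.comp_aemeasurable hr).mul_const _).aestronglyMeasurable
    apply MeasureTheory.Integrable.mono'
      (g := fun _ => C)
      (MeasureTheory.integrableOn_const measure_Ioc_lt_top.ne) hmu'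
    filter_upwards [MeasureTheory.ae_restrict_mem measurableSet_Ioc] with x hx
    exact hbound x (hIocIcc hx)
  -- integration by parts
  have key : (∫ t in a..b, (ψ t : ℂ) * Complex.exp (Complex.I * Complex.ofReal (τ * f t)))
      = -(∫ t in a..b, u' t * v t) := by
    have hint_eq : Set.EqOn (fun t => (ψ t : ℂ) * Complex.exp (Complex.I * Complex.ofReal (τ * f t)))
        (fun t => u t * v' t) (Set.uIcc a b) := by
      intro t ht
      rw [huIcc] at ht
      have h1 : (f' t : ℂ) ≠ 0 := Complex.ofReal_ne_zero.mpr (hf'ne t ht)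
      have h2 : (τ : ℂ) ≠ 0 := Complex.ofReal_ne_zero.mpr hτ
      simp only [u, v', Complex.ofReal_mul]
      field_simp
    rw [intervalIntegral.integral_congr hint_eq,
      intervalIntegral.integral_mul_deriv_eq_deriv_mul hu_deriv hv_deriv hu'int hv'int]
    have hua : u a = 0 := by simp [u, hψa]
    have hub : u b = 0 := by simp [u, hψb]
    rw [hua, hub]
    ring
  rw [key, norm_neg]
  have hstep : ‖∫ t in a..b, u' t * v t‖ ≤ C * |b - a| := by
    apply intervalIntegral.norm_integral_le_of_norm_le_const
    intro x hx
    rw [Set.uIoc_of_le hab.le] at hx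
    have hvx : ‖v x‖ = 1 := by
      simp [v, Complex.norm_exp]
    rw [norm_mul, hvx, mul_one]
    exact hbound x (Set.Ioc_subset_Icc_self hx)
  have halg : (Mψ / c₁ + (b - a) * Mψ * c₂ / c₁ ^ 2) * (b - a)
      ≤ (2 * (b - a) / c₁ + (b - a) ^ 2 * c₂ / c₁ ^ 2) * Mψ := by
    have hdiff : (2 * (b - a) / c₁ + (b - a) ^ 2 * c₂ / c₁ ^ 2) * Mψ
        - (Mψ / c₁ + (b - a) * Mψ * c₂ / c₁ ^ 2) * (b - a) = (b - a) * Mψ / c₁ := by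
      field_simp
      ring
    have hpos : 0 ≤ (b - a) * Mψ / c₁ := div_nonneg (mul_nonneg (by linarith) hMψ0) hc₁.le
    linarith
  calc ‖∫ t in a..b, u' t * v t‖ ≤ C * |b - a| := hstep
    _ = ((Mψ / c₁ + (b - a) * Mψ * c₂ / c₁ ^ 2) * (b - a)) * |τ|⁻¹ := by
        rw [abs_of_pos (by linarith : (0:ℝ) < b - a)]; ring
    _ ≤ ((2 * (b - a) / c₁ + (b - a) ^ 2 * c₂ / c₁ ^ 2) * Mψ) * |τ|⁻¹ :=
        mul_le_mul_of_nonneg_right halg (inv_nonneg.mpr (abs_nonneg τ))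
    _ = (1 / |τ|) * (2 * (b - a) / c₁ + (b - a) ^ 2 * c₂ / c₁ ^ 2) * Mψ := by
        rw [one_div]; ring
end

section
/- Let κ > 0 and let f : ℝ → ℝ be twice differentiable on (a − κ, b + κ) with f″ continuous on (a − κ, b + κ), |f′(t)| ≥ c₁ > 0 on [a,b], and |f″(t)| > 0 on [a,b]. Let ψ : ℝ → ℝ be smooth with support contained in [a + κ, b − κ]. Then for every real τ ≠ 0, |∫_a^b ψ(t)·e^{iτf(t)} dt| ≤ (1/|τ|)·(4(b−a)/c₁)·max_{x ∈ (a,b)} |ψ′(x)|. -/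
open Set intervalIntegral MeasureTheory

lemma aux_sign {a b : ℝ} {g : ℝ → ℝ} (hab : a ≤ b) (hg : ContinuousOn g (Set.Icc a b))
    (h0 : ∀ t ∈ Set.Icc a b, g t ≠ 0) :
    (∀ t ∈ Set.Icc a b, 0 < g t) ∨ (∀ t ∈ Set.Icc a b, g t < 0) := by
  have ha : a ∈ Set.Icc a b := ⟨le_rfl, hab⟩
  have key : ∀ t ∈ Set.Icc a b, ∀ s ∈ Set.Icc a b, 0 < g t → g s < 0 → False := by
    intro t ht s hs hgt hgs
    have hsub : Set.uIcc t s ⊆ Set.Icc a b := Set.uIcc_subset_Icc ht hs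
    have := intermediate_value_uIcc (hg.mono hsub)
    have h0mem : (0 : ℝ) ∈ Set.uIcc (g t) (g s) := by
      rw [Set.mem_uIcc]; right; exact ⟨hgs.le, hgt.le⟩
    obtain ⟨x, hx, hgx⟩ := this h0mem
    exact h0 x (hsub hx) hgx
  rcases (h0 a ha).lt_or_gt with hneg | hpos
  · right; intro t ht
    rcases (h0 t ht).lt_or_gt with h | h
    · exact h
    · exact absurd (key t ht a ha h hneg) (by simp)
  · left; intro t ht
    rcases (h0 t ht).lt_or_gt with h | h
    · exact absurd (key a ha t ht hpos h) (by simp)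
    · exact h

/-- First-derivative oscillatory integral estimate (case ii of Lemma 5.1):
if `|f′| ≥ c₁ > 0` on `[a,b]`, `f″` is continuous on `(a−κ,b+κ)` and nowhere zero on `[a,b]`,
and `ψ` is smooth with support in `[a+κ, b−κ]`, then for `τ ≠ 0`,
`|∫_a^b ψ(t)e^{iτf(t)}dt| ≤ (1/|τ|)(4(b−a)/c₁)·max_{(a,b)}|ψ′|`. -/
theorem stmt6 (a b κ c₁ τ Mψ : ℝ) (f f' f'' ψ : ℝ → ℝ)
    (hκ : 0 < κ) (hab : a < b)
    (hf' : ∀ t ∈ Set.Ioo (a - κ) (b + κ), HasDerivAt f (f' t) t)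
    (hf'' : ∀ t ∈ Set.Ioo (a - κ) (b + κ), HasDerivAt f' (f'' t) t)
    (hcont : ContinuousOn f'' (Set.Ioo (a - κ) (b + κ)))
    (hc₁ : 0 < c₁) (hlow : ∀ t ∈ Set.Icc a b, c₁ ≤ |f' t|)
    (hne : ∀ t ∈ Set.Icc a b, 0 < |f'' t|)
    (hψ : ContDiff ℝ (⊤ : ℕ∞) ψ)
    (hsupp : Function.support ψ ⊆ Set.Icc (a + κ) (b - κ))
    (hMψ : ∀ x ∈ Set.Ioo a b, |deriv ψ x| ≤ Mψ)
    (hτ : τ ≠ 0) :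
    ‖∫ t in a..b, (ψ t : ℂ) * Complex.exp (Complex.I * Complex.ofReal (τ * f t))‖ ≤
      (1 / |τ|) * (4 * (b - a) / c₁) * Mψ := by
  have hab' : a ≤ b := hab.le
  have hIcc : Set.Icc a b ⊆ Set.Ioo (a - κ) (b + κ) := fun t ht =>
    ⟨by linarith [ht.1], by linarith [ht.2]⟩
  have huIcc : Set.uIcc a b = Set.Icc a b := Set.uIcc_of_le hab'
  -- basic continuity facts
  have hfc : ContinuousOn f (Set.Icc a b) := fun t ht =>
    ((hf' t (hIcc ht)).continuousAt).continuousWithinAt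
  have hf'c : ContinuousOn f' (Set.Icc a b) := fun t ht =>
    ((hf'' t (hIcc ht)).continuousAt).continuousWithinAt
  have hf''c : ContinuousOn f'' (Set.Icc a b) := hcont.mono hIcc
  have hψdiff : Differentiable ℝ ψ := hψ.differentiable (by simp)
  have hψ'c : Continuous (deriv ψ) := hψ.continuous_deriv (by simp)
  have hψc : Continuous ψ := hψ.continuous
  -- nonvanishing of f'
  have hf'ne : ∀ t ∈ Set.Icc a b, f' t ≠ 0 := by
    intro t ht h
    have := hlow t ht
    rw [h, abs_zero] at this; linarith
  have hf''ne : ∀ t ∈ Set.Icc a b, f'' t ≠ 0 := by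
    intro t ht h
    have := hne t ht
    rw [h, abs_zero] at this; linarith
  -- ψ vanishes outside [a+κ, b-κ]
  have hψ0 : ∀ t, t < a + κ ∨ b - κ < t → ψ t = 0 := by
    intro t ht
    by_contra h
    have := hsupp (Function.mem_support.mpr h)
    rcases ht with h1 | h1
    · exact absurd this.1 (by linarith)
    · exact absurd this.2 (by linarith)
  have hψa : ψ a = 0 := hψ0 a (Or.inl (by linarith))
  have hψb : ψ b = 0 := hψ0 b (Or.inr (by linarith))
  have hda : deriv ψ a = 0 := by
    have hev : ψ =ᶠ[nhds a] fun _ => (0 : ℝ) := by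
      filter_upwards [Iio_mem_nhds (show a < a + κ by linarith)] with x hx
      exact hψ0 x (Or.inl hx)
    rw [hev.deriv_eq, deriv_const]
  have hdb : deriv ψ b = 0 := by
    have hev : ψ =ᶠ[nhds b] fun _ => (0 : ℝ) := by
      filter_upwards [Ioi_mem_nhds (show b - κ < b by linarith)] with x hx
      exact hψ0 x (Or.inr hx)
    rw [hev.deriv_eq, deriv_const]
  have hMψ0 : 0 ≤ Mψ :=
    le_trans (abs_nonneg _) (hMψ ((a + b) / 2) ⟨by linarith, by linarith⟩)
  have hMψIcc : ∀ t ∈ Set.Icc a b, |deriv ψ t| ≤ Mψ := by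
    intro t ht
    rcases ht.1.eq_or_lt with rfl | h1
    · rw [hda, abs_zero]; exact hMψ0
    rcases ht.2.eq_or_lt with rfl | h2
    · rw [hdb, abs_zero]; exact hMψ0
    exact hMψ t ⟨h1, h2⟩
  -- bound on ψ itself
  have hψbd : ∀ t ∈ Set.Icc a b, |ψ t| ≤ Mψ * (b - a) := by
    intro t ht
    have hft : ψ t = ∫ s in a..t, deriv ψ s := by
      rw [intervalIntegral.integral_deriv_eq_sub (fun x _ => hψdiff x)
        (hψ'c.intervalIntegrable a t), hψa, sub_zero]
    have hb : ∀ x ∈ Set.uIoc a t, ‖deriv ψ x‖ ≤ Mψ := by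
      intro x hx
      rw [Set.uIoc_of_le ht.1] at hx
      exact hMψIcc x ⟨hx.1.le, hx.2.trans ht.2⟩
    have := intervalIntegral.norm_integral_le_of_norm_le_const hb
    rw [← hft, Real.norm_eq_abs] at this
    calc |ψ t| ≤ Mψ * |t - a| := this
      _ ≤ Mψ * (b - a) := by
          rw [abs_of_nonneg (by linarith [ht.1])]
          gcongr
          · linarith [ht.2]
  have hstep : ‖∫ t in a..b, (ψ t : ℂ) * Complex.exp (Complex.I * Complex.ofReal (τ * f t))‖ =
      ‖∫ t in a..b,
        ((((deriv ψ t * f' t - ψ t * f'' t : ℝ) : ℂ)) /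
            ((Complex.I * (τ:ℂ)) * ((f' t : ℂ))^2)) *
          Complex.exp ((Complex.I * (τ:ℂ)) * (f t : ℂ))‖ := by
    set c : ℂ := Complex.I * (τ:ℂ) with hc
    have hcne : c ≠ 0 := mul_ne_zero Complex.I_ne_zero (by exact_mod_cast hτ)
    set u : ℝ → ℂ := fun t => (ψ t : ℂ) / (c * (f' t : ℂ)) with hu_def
    set u' : ℝ → ℂ := fun t =>
      (((deriv ψ t * f' t - ψ t * f'' t : ℝ) : ℂ)) / (c * ((f' t : ℂ))^2) with hu'_def
    set v : ℝ → ℂ := fun t => Complex.exp (c * (f t : ℂ)) with hv_def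
    set v' : ℝ → ℂ := fun t => Complex.exp (c * (f t : ℂ)) * (c * (f' t : ℂ)) with hv'_def
    have hdenne : ∀ t ∈ Set.Icc a b, (c * (f' t : ℂ)) ≠ 0 := fun t ht =>
      mul_ne_zero hcne (Complex.ofReal_ne_zero.mpr (hf'ne t ht))
    have hu : ∀ x ∈ Set.uIcc a b, HasDerivAt u (u' x) x := by
      intro x hx
      rw [huIcc] at hx
      have hx' := hIcc hx
      have h1 : HasDerivAt (fun t => (ψ t : ℂ)) (((deriv ψ x : ℝ) : ℂ)) x :=
        ((hψdiff x).hasDerivAt).ofReal_comp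
      have h2 : HasDerivAt (fun t => c * (f' t : ℂ)) (c * (f'' x : ℂ)) x :=
        ((hf'' x hx').ofReal_comp).const_mul c
      have := h1.div h2 (hdenne x hx)
      have hf'x : ((f' x : ℂ)) ≠ 0 := Complex.ofReal_ne_zero.mpr (hf'ne x hx)
      have d1 : c * ((f' x : ℂ))^2 ≠ 0 := mul_ne_zero hcne (pow_ne_zero 2 hf'x)
      have d2 : (c * (f' x : ℂ))^2 ≠ 0 := pow_ne_zero 2 (hdenne x hx)
      have heq : u' x =
          (((deriv ψ x : ℝ) : ℂ) * (c * (f' x : ℂ)) - (ψ x : ℂ) * (c * (f'' x : ℂ))) /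
            (c * (f' x : ℂ)) ^ 2 := by
        rw [hu'_def]
        rw [div_eq_div_iff d1 d2]
        push_cast
        ring
      rw [heq]
      exact this
    have hv : ∀ x ∈ Set.uIcc a b, HasDerivAt v (v' x) x := by
      intro x hx
      rw [huIcc] at hx
      exact (((hf' x (hIcc hx)).ofReal_comp).const_mul c).cexp
    -- integrability
    have hcf' : ContinuousOn (fun t => c * (f' t : ℂ)) (Set.Icc a b) :=
      continuousOn_const.mul (Complex.continuous_ofReal.comp_continuousOn hf'c)
    have hu'c : ContinuousOn u' (Set.Icc a b) := by
      apply ContinuousOn.div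
      · exact Complex.continuous_ofReal.comp_continuousOn
          (((hψ'c.continuousOn.mul hf'c)).sub (hψc.continuousOn.mul hf''c))
      · exact continuousOn_const.mul
          ((Complex.continuous_ofReal.comp_continuousOn hf'c).pow 2)
      · intro t ht
        exact mul_ne_zero hcne (pow_ne_zero 2 (Complex.ofReal_ne_zero.mpr (hf'ne t ht)))
    have hu'int : IntervalIntegrable u' volume a b := by
      apply ContinuousOn.intervalIntegrable; rwa [huIcc]
    have hv'int : IntervalIntegrable v' volume a b := by
      apply ContinuousOn.intervalIntegrable
      rw [huIcc]
      exact (Complex.continuous_exp.comp_continuousOn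
        (continuousOn_const.mul (Complex.continuous_ofReal.comp_continuousOn hfc))).mul hcf'
    have ibp := intervalIntegral.integral_mul_deriv_eq_deriv_mul hu hv hu'int hv'int
    have e1 : ∫ t in a..b, (ψ t : ℂ) * Complex.exp (Complex.I * Complex.ofReal (τ * f t)) =
        ∫ x in a..b, u x * v' x := by
      apply intervalIntegral.integral_congr
      intro x hx
      rw [huIcc] at hx
      have hne : c * (f' x : ℂ) ≠ 0 := hdenne x hx
      have hexp : Complex.I * Complex.ofReal (τ * f x) = c * (f x : ℂ) := by
        rw [hc]; push_cast; ring
      simp only [hu_def, hv'_def, hexp]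
      have hf'x : (f' x : ℂ) ≠ 0 := Complex.ofReal_ne_zero.mpr (hf'ne x hx)
      field_simp
    have hua : u a = 0 := by simp [hu_def, hψa]
    have hub : u b = 0 := by simp [hu_def, hψb]
    rw [e1, ibp, hua, hub]
    simp only [zero_mul, sub_zero, zero_sub, norm_neg]
    rfl
  rw [hstep]
  have hτ0 : (0:ℝ) < |τ| := abs_pos.mpr hτ
  set n : ℝ → ℝ := fun t => deriv ψ t * f' t - ψ t * f'' t with hn_def
  set G : ℝ → ℝ := fun t =>
    (1/|τ|) * ((1/c₁) * |deriv ψ t| + (Mψ * (b - a)) * (|f'' t| / (f' t)^2)) with hG_def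
  -- pointwise norm identity and bound
  have hnorm : ∀ t, ‖(((n t : ℝ) : ℂ)) / ((Complex.I * (τ:ℂ)) * ((f' t : ℂ))^2) *
      Complex.exp ((Complex.I * (τ:ℂ)) * (f t : ℂ))‖ = |n t| / (|τ| * (f' t)^2) := by
    intro t
    have hexp : (Complex.I * (τ:ℂ)) * (f t : ℂ) = ((τ * f t : ℝ) : ℂ) * Complex.I := by
      push_cast; ring
    rw [norm_mul, hexp, Complex.norm_exp_ofReal_mul_I, mul_one, norm_div, norm_mul,
      norm_mul, Complex.norm_I, one_mul, norm_pow]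
    simp [Real.norm_eq_abs, sq_abs]
  have hpt : ∀ t ∈ Set.Icc a b, |n t| / (|τ| * (f' t)^2) ≤ G t := by
    intro t ht
    have hf2 : (0:ℝ) < (f' t)^2 := by
      have := hf'ne t ht
      positivity
    rw [div_le_iff₀ (by positivity), hG_def]
    have e : (1/|τ|) * ((1/c₁) * |deriv ψ t| + (Mψ * (b - a)) * (|f'' t| / (f' t)^2)) *
        (|τ| * (f' t)^2) =
        |deriv ψ t| * ((f' t)^2 / c₁) + (Mψ * (b - a)) * |f'' t| := by
      have hf0 := hf'ne t ht
      field_simp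
    rw [e]
    have h1 : |n t| ≤ |deriv ψ t| * |f' t| + |ψ t| * |f'' t| := by
      rw [hn_def]
      calc |deriv ψ t * f' t - ψ t * f'' t| ≤ |deriv ψ t * f' t| + |ψ t * f'' t| :=
            abs_sub _ _
        _ = |deriv ψ t| * |f' t| + |ψ t| * |f'' t| := by rw [abs_mul, abs_mul]
    have h2 : |f' t| ≤ (f' t)^2 / c₁ := by
      rw [le_div_iff₀ hc₁]
      nlinarith [sq_abs (f' t), hlow t ht, abs_nonneg (f' t)]
    calc |n t| ≤ |deriv ψ t| * |f' t| + |ψ t| * |f'' t| := h1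
      _ ≤ |deriv ψ t| * ((f' t)^2 / c₁) + (Mψ * (b - a)) * |f'' t| :=
          add_le_add (mul_le_mul_of_nonneg_left h2 (abs_nonneg _))
            (mul_le_mul_of_nonneg_right (hψbd t ht) (abs_nonneg _))
  -- continuity / integrability
  have hsqne : ∀ t ∈ Set.Icc a b, (f' t)^2 ≠ 0 := fun t ht => pow_ne_zero 2 (hf'ne t ht)
  have hh2c : ContinuousOn (fun t => |f'' t| / (f' t)^2) (Set.Icc a b) :=
    hf''c.abs.div (hf'c.pow 2) hsqne
  have hGint : IntervalIntegrable G volume a b := by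
    apply ContinuousOn.intervalIntegrable
    rw [huIcc, hG_def]
    exact continuousOn_const.mul
      ((continuousOn_const.mul hψ'c.abs.continuousOn).add (continuousOn_const.mul hh2c))
  have hic : ContinuousOn (fun t =>
      ((((deriv ψ t * f' t - ψ t * f'' t : ℝ) : ℂ)) /
          ((Complex.I * (τ:ℂ)) * ((f' t : ℂ))^2)) *
        Complex.exp ((Complex.I * (τ:ℂ)) * (f t : ℂ))) (Set.Icc a b) := by
    apply ContinuousOn.mul
    · apply ContinuousOn.div
      · exact Complex.continuous_ofReal.comp_continuousOn
          ((hψ'c.continuousOn.mul hf'c).sub (hψc.continuousOn.mul hf''c))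
      · exact continuousOn_const.mul
          ((Complex.continuous_ofReal.comp_continuousOn hf'c).pow 2)
      · intro t ht
        exact mul_ne_zero (mul_ne_zero Complex.I_ne_zero (Complex.ofReal_ne_zero.mpr hτ))
          (pow_ne_zero 2 (Complex.ofReal_ne_zero.mpr (hf'ne t ht)))
    · exact Complex.continuous_exp.comp_continuousOn
        (continuousOn_const.mul (Complex.continuous_ofReal.comp_continuousOn hfc))
  have hnormint : IntervalIntegrable (fun t => |n t| / (|τ| * (f' t)^2)) volume a b := by
    apply ContinuousOn.intervalIntegrable
    rw [huIcc]
    have : ContinuousOn (fun t => |n t|) (Set.Icc a b) := by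
      rw [hn_def]
      exact ((hψ'c.continuousOn.mul hf'c).sub (hψc.continuousOn.mul hf''c)).abs
    exact this.div (continuousOn_const.mul (hf'c.pow 2))
      (fun t ht => mul_ne_zero (ne_of_gt hτ0) (hsqne t ht))
  -- FTC for |f''|/f'^2
  have hf''int : IntervalIntegrable (fun t => f'' t / (f' t)^2) volume a b := by
    apply ContinuousOn.intervalIntegrable
    rw [huIcc]
    exact hf''c.div (hf'c.pow 2) hsqne
  have hFTC : ∫ t in a..b, f'' t / (f' t)^2 = (f' a)⁻¹ - (f' b)⁻¹ := by
    have hd : ∀ t ∈ Set.uIcc a b,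
        HasDerivAt (fun t => -(f' t)⁻¹) (f'' t / (f' t)^2) t := by
      intro t ht
      rw [huIcc] at ht
      have := ((hf'' t (hIcc ht)).inv (hf'ne t ht)).neg
      have e : f'' t / f' t ^ 2 = -(-f'' t / f' t ^ 2) := by ring
      rw [e]
      exact this
    rw [intervalIntegral.integral_eq_sub_of_hasDerivAt hd hf''int]
    ring
  have habs2 : ∫ t in a..b, |f'' t| / (f' t)^2 ≤ 2 / c₁ := by
    have ia : |(f' a)⁻¹| ≤ 1/c₁ := by
      rw [abs_inv, one_div]
      exact inv_anti₀ hc₁ (hlow a ⟨le_rfl, hab'⟩)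
    have ib : |(f' b)⁻¹| ≤ 1/c₁ := by
      rw [abs_inv, one_div]
      exact inv_anti₀ hc₁ (hlow b ⟨hab', le_rfl⟩)
    rcases aux_sign hab' hf''c hf''ne with hp | hn
    · have heq : Set.EqOn (fun t => |f'' t| / (f' t)^2) (fun t => f'' t / (f' t)^2)
          (Set.uIcc a b) := by
        rw [huIcc]
        intro t ht
        simp only [abs_of_pos (hp t ht)]
      rw [intervalIntegral.integral_congr heq, hFTC]
      have := abs_sub ((f' a)⁻¹) ((f' b)⁻¹)
      have h3 := le_abs_self ((f' a)⁻¹ - (f' b)⁻¹)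
      have h4 : 1/c₁ + 1/c₁ = 2/c₁ := by ring
      linarith
    · have heq : Set.EqOn (fun t => |f'' t| / (f' t)^2) (fun t => -(f'' t / (f' t)^2))
          (Set.uIcc a b) := by
        rw [huIcc]
        intro t ht
        simp only [abs_of_neg (hn t ht), neg_div]
      rw [intervalIntegral.integral_congr heq, intervalIntegral.integral_neg, hFTC]
      have := abs_sub ((f' b)⁻¹) ((f' a)⁻¹)
      have h3 := le_abs_self (-((f' a)⁻¹ - (f' b)⁻¹))
      have h4 : 1/c₁ + 1/c₁ = 2/c₁ := by ring
      have h5 := abs_neg ((f' a)⁻¹ - (f' b)⁻¹)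
      have h6 : |(f' a)⁻¹ - (f' b)⁻¹| = |(f' b)⁻¹ - (f' a)⁻¹| := abs_sub_comm _ _
      linarith
  have hψ'bd : ∫ t in a..b, |deriv ψ t| ≤ (b - a) * Mψ := by
    calc ∫ t in a..b, |deriv ψ t| ≤ ∫ _t in a..b, Mψ := by
          apply intervalIntegral.integral_mono_on hab'
          · exact (hψ'c.abs.continuousOn).intervalIntegrable
          · exact intervalIntegrable_const
          · exact hMψIcc
      _ = (b - a) * Mψ := by simp [intervalIntegral.integral_const, smul_eq_mul]
  -- chain
  calc ‖∫ t in a..b,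
        ((((deriv ψ t * f' t - ψ t * f'' t : ℝ) : ℂ)) /
            ((Complex.I * (τ:ℂ)) * ((f' t : ℂ))^2)) *
          Complex.exp ((Complex.I * (τ:ℂ)) * (f t : ℂ))‖
      ≤ ∫ t in a..b, ‖((((deriv ψ t * f' t - ψ t * f'' t : ℝ) : ℂ)) /
            ((Complex.I * (τ:ℂ)) * ((f' t : ℂ))^2)) *
          Complex.exp ((Complex.I * (τ:ℂ)) * (f t : ℂ))‖ :=
        intervalIntegral.norm_integral_le_integral_norm hab'
    _ = ∫ t in a..b, |n t| / (|τ| * (f' t)^2) := by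
        apply intervalIntegral.integral_congr
        intro t _
        exact hnorm t
    _ ≤ ∫ t in a..b, G t := by
        apply intervalIntegral.integral_mono_on hab' hnormint hGint
        exact hpt
    _ = (1/|τ|) * ((1/c₁) * (∫ t in a..b, |deriv ψ t|) +
          (Mψ * (b - a)) * (∫ t in a..b, |f'' t| / (f' t)^2)) := by
        rw [hG_def]
        rw [intervalIntegral.integral_const_mul]
        congr 1
        rw [intervalIntegral.integral_add
          ((hψ'c.abs.continuousOn.intervalIntegrable).const_mul _)
          ((by apply ContinuousOn.intervalIntegrable; rwa [huIcc] :
            IntervalIntegrable (fun t => |f'' t| / (f' t)^2) volume a b).const_mul _),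
          intervalIntegral.integral_const_mul, intervalIntegral.integral_const_mul]
    _ ≤ (1/|τ|) * ((1/c₁) * ((b - a) * Mψ) + (Mψ * (b - a)) * (2/c₁)) := by
        apply mul_le_mul_of_nonneg_left _ (by positivity)
        apply add_le_add
        · exact mul_le_mul_of_nonneg_left hψ'bd (by positivity)
        · apply mul_le_mul_of_nonneg_left habs2
          have hba : (0:ℝ) ≤ b - a := by linarith
          positivity
    _ ≤ (1 / |τ|) * (4 * (b - a) / c₁) * Mψ := by
        have hX : 0 ≤ (b - a) * Mψ / c₁ :=
          div_nonneg (mul_nonneg (by linarith) hMψ0) hc₁.le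
        have e : (1/|τ|) * ((4 * (b - a) / c₁) * Mψ) -
            (1/|τ|) * ((1/c₁) * ((b - a) * Mψ) + (Mψ * (b - a)) * (2/c₁)) =
            (1/|τ|) * ((b - a) * Mψ / c₁) := by ring
        have hP : 0 ≤ (1/|τ|) * ((b - a) * Mψ / c₁) :=
          mul_nonneg (by positivity) hX
        linarith [e, hP]
end

section
/- Let 𝔉 : ℝⁿ → ℝⁿ be smooth, x₀ ∈ ℝⁿ with A = Jac 𝔉(x₀) invertible, and let W be a bounded convex open set containing x₀ on which det(Jac 𝔉) never vanishes and on which |∂𝔉ᵢ/∂xⱼ(x) − ∂𝔉ᵢ/∂xⱼ(x₀)| < M for all i, j, where 0 < M < |det A|/(n·n!·a_max^{n−1}) with a_max the maximum absolute value of entries of A. Set m = min_{x ∈ ∂W} ‖𝔉(x) − 𝔉(x₀)‖ and V = {y : ‖y − 𝔉(x₀)‖ < m/2}. Then for every y ∈ V there exists exactly one x ∈ W with 𝔉(x) = y. -/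
lemma card_perm_filter_eq (N : ℕ) (i j : Fin (N + 1)) :
    (Finset.univ.filter (fun σ : Equiv.Perm (Fin (N + 1)) => σ i = j)).card = N.factorial := by
  have h0 : (Finset.univ.filter (fun σ : Equiv.Perm (Fin (N + 1)) => σ 0 = j)).card
      = N.factorial := by
    have hcard : (Finset.univ : Finset (Equiv.Perm (Fin N))).card = N.factorial := by
      rw [Finset.card_univ, Fintype.card_perm, Fintype.card_fin]
    rw [← hcard]
    apply Finset.card_nbij' (i := fun σ => (Equiv.Perm.decomposeFin σ).2)
      (j := fun e => Equiv.Perm.decomposeFin.symm (j, e))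
    · intro σ _; simp
    · intro e _
      simp only [Finset.mem_filter, Finset.mem_univ, true_and]
      simpa using Equiv.Perm.decomposeFin_symm_apply_zero j e
    · intro σ hσ
      simp only [Finset.coe_filter, Finset.mem_filter, Finset.mem_univ, true_and,
        Set.mem_setOf_eq] at hσ
      have h1 : (Equiv.Perm.decomposeFin σ).1 = j := by
        have := Equiv.Perm.decomposeFin_symm_apply_zero (Equiv.Perm.decomposeFin σ).1
          (Equiv.Perm.decomposeFin σ).2
        have h2 := congrArg (fun τ : Equiv.Perm (Fin (N+1)) => τ 0)
          (Equiv.Perm.decomposeFin.symm_apply_apply σ)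
        rw [this] at h2
        rw [h2, hσ]
      conv_rhs => rw [← Equiv.Perm.decomposeFin.symm_apply_apply σ]
      rw [show Equiv.Perm.decomposeFin σ = (j, (Equiv.Perm.decomposeFin σ).2) from
        Prod.ext h1 rfl]
    · intro e _; simp
  rw [← h0]
  apply Finset.card_nbij' (i := fun σ => σ * Equiv.swap 0 i) (j := fun σ => σ * Equiv.swap 0 i)
  · intro σ hσ
    simp only [Finset.mem_filter, Finset.mem_univ, true_and] at *
    simpa [Equiv.Perm.mul_apply] using hσ
  · intro σ hσ
    simp only [Finset.mem_filter, Finset.mem_univ, true_and] at *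
    simpa [Equiv.Perm.mul_apply] using hσ
  · intro σ _; simp [mul_assoc]
  · intro σ _; simp [mul_assoc]

lemma abs_adjugate_le {N : ℕ} (A : Matrix (Fin (N + 1)) (Fin (N + 1)) ℝ) {a : ℝ} (ha : 0 ≤ a)
    (h : ∀ i j, |A i j| ≤ a) (i j : Fin (N + 1)) :
    |A.adjugate i j| ≤ N.factorial * a ^ N := by
  rw [Matrix.adjugate_apply]
  set B := A.updateRow j (Pi.single i 1) with hB
  rw [Matrix.det_apply]
  calc |∑ σ : Equiv.Perm (Fin (N + 1)), Equiv.Perm.sign σ • ∏ k, B (σ k) k|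
      ≤ ∑ σ : Equiv.Perm (Fin (N + 1)), |Equiv.Perm.sign σ • ∏ k, B (σ k) k| :=
        Finset.abs_sum_le_sum_abs _ _
    _ ≤ N.factorial * a ^ N := ?_
  have key : ∀ σ : Equiv.Perm (Fin (N + 1)),
      |Equiv.Perm.sign σ • ∏ k, B (σ k) k| ≤ if σ i = j then a ^ N else 0 := by
    intro σ
    have habs : |Equiv.Perm.sign σ • ∏ k, B (σ k) k| = |∏ k, B (σ k) k| := by
      rcases Int.units_eq_one_or (Equiv.Perm.sign σ) with hs | hs <;>
        simp [hs, Units.smul_def, abs_neg]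
    rw [habs]
    by_cases hij : σ i = j
    · simp only [hij, if_true]
      have : ∀ k, k ≠ i → |B (σ k) k| ≤ a := by
        intro k hk
        have hk' : σ k ≠ j := fun hkj => hk (σ.injective (hkj.trans hij.symm))
        rw [hB, Matrix.updateRow_ne hk']
        exact h _ _
      calc |∏ k, B (σ k) k| = ∏ k, |B (σ k) k| := by rw [Finset.abs_prod]
        _ = |B (σ i) i| * ∏ k ∈ Finset.univ.erase i, |B (σ k) k| :=
            (Finset.mul_prod_erase Finset.univ _ (Finset.mem_univ i)).symm
        _ ≤ 1 * a ^ N := by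
            apply mul_le_mul
            · rw [hij, hB, Matrix.updateRow_self]
              simp [Pi.single_apply]
            · calc ∏ k ∈ Finset.univ.erase i, |B (σ k) k|
                  ≤ ∏ k ∈ Finset.univ.erase i, a :=
                    Finset.prod_le_prod (fun k _ => abs_nonneg _) (fun k hk => this k
                      (Finset.ne_of_mem_erase hk))
                _ = a ^ N := by
                    rw [Finset.prod_const, Finset.card_erase_of_mem (Finset.mem_univ i)]
                    simp
            · exact Finset.prod_nonneg fun k _ => abs_nonneg _
            · exact zero_le_one
        _ = a ^ N := one_mul _
    · simp only [hij, if_false]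
      have hzero : B (σ (σ.symm j)) (σ.symm j) = 0 := by
        rw [σ.apply_symm_apply, hB, Matrix.updateRow_self, Pi.single_apply, if_neg]
        intro hji
        exact hij (by rw [← hji, σ.apply_symm_apply])
      rw [abs_eq_zero.mpr]
      exact Finset.prod_eq_zero (Finset.mem_univ (σ.symm j)) hzero
  calc ∑ σ : Equiv.Perm (Fin (N + 1)), |Equiv.Perm.sign σ • ∏ k, B (σ k) k|
      ≤ ∑ σ : Equiv.Perm (Fin (N + 1)), if σ i = j then a ^ N else 0 :=
        Finset.sum_le_sum fun σ _ => key σ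
    _ = (Finset.univ.filter (fun σ : Equiv.Perm (Fin (N + 1)) => σ i = j)).card * a ^ N := by
        rw [Finset.sum_ite, Finset.sum_const_zero, add_zero, Finset.sum_const,
          nsmul_eq_mul]
    _ = N.factorial * a ^ N := by rw [card_perm_filter_eq]

lemma mulVec_zero_eq_zero {N : ℕ} (A B : Matrix (Fin (N + 1)) (Fin (N + 1)) ℝ) {amax M : ℝ}
    (hamax : ∀ i j, |A i j| ≤ amax) (hM0 : 0 < M)
    (hMlt : (N + 1 : ℝ) * (N + 1).factorial * amax ^ N * M < |A.det|)
    (hclose : ∀ i j, |B i j - A i j| < M) (v : Fin (N + 1) → ℝ)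
    (hv : B.mulVec v = 0) : v = 0 := by
  by_contra hne
  have ha0 : 0 ≤ amax := le_trans (abs_nonneg _) (hamax 0 0)
  -- choose coordinate of max absolute value
  obtain ⟨j₀, -, hj₀⟩ := Finset.exists_max_image (Finset.univ : Finset (Fin (N + 1)))
    (fun l => |v l|) ⟨0, Finset.mem_univ 0⟩
  set m0 := |v j₀| with hm0def
  have hm0 : 0 < m0 := by
    rcases Function.ne_iff.mp hne with ⟨l, hl⟩
    exact lt_of_lt_of_le (abs_pos.mpr hl) (hj₀ l (Finset.mem_univ l))
  -- det A • v = adjugate A *ᵥ ((A - B) *ᵥ v)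
  have h1 : A.det • v = A.adjugate.mulVec ((A - B).mulVec v) := by
    rw [Matrix.sub_mulVec, hv, sub_zero, Matrix.mulVec_mulVec, Matrix.adjugate_mul,
      Matrix.smul_mulVec, Matrix.one_mulVec]
  -- bound on (A - B) *ᵥ v entries
  have h2 : ∀ k, |((A - B).mulVec v) k| < (N + 1) * M * m0 := by
    intro k
    have : |((A - B).mulVec v) k| ≤ ∑ l, |(A - B) k l| * |v l| := by
      rw [Matrix.mulVec, dotProduct]
      refine le_trans (Finset.abs_sum_le_sum_abs _ _) ?_
      refine Finset.sum_le_sum fun l _ => ?_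
      rw [abs_mul]
    refine lt_of_le_of_lt this ?_
    have hlt : ∀ l ∈ Finset.univ, |(A - B) k l| * |v l| < M * m0 := by
      intro l _
      rcases eq_or_ne (v l) 0 with hvl | hvl
      · rw [hvl, abs_zero, mul_zero]; positivity
      · have h3 : |(A - B) k l| < M := by
          have := hclose k l
          simpa [Matrix.sub_apply, abs_sub_comm] using this
        calc |(A - B) k l| * |v l| < M * |v l| :=
              mul_lt_mul_of_pos_right h3 (abs_pos.mpr hvl)
          _ ≤ M * m0 := mul_le_mul_of_nonneg_left (hj₀ l (Finset.mem_univ l)) hM0.le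
    calc ∑ l, |(A - B) k l| * |v l| < ∑ _l : Fin (N + 1), M * m0 :=
          Finset.sum_lt_sum_of_nonempty Finset.univ_nonempty hlt
      _ = (N + 1) * M * m0 := by
          rw [Finset.sum_const, Finset.card_univ, Fintype.card_fin, nsmul_eq_mul]
          push_cast; ring
  -- combine
  have h4 : |A.det| * m0 < |A.det| * m0 := by
    have hleft : |A.det| * m0 = |(A.adjugate.mulVec ((A - B).mulVec v)) j₀| := by
      rw [← h1]; simp [abs_mul, hm0def]
    have h5 : |(A.adjugate.mulVec ((A - B).mulVec v)) j₀|
        ≤ ∑ k, (N.factorial * amax ^ N) * |((A - B).mulVec v) k| := by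
      rw [Matrix.mulVec, dotProduct]
      refine le_trans (Finset.abs_sum_le_sum_abs _ _) ?_
      refine Finset.sum_le_sum fun k _ => ?_
      rw [abs_mul]
      exact mul_le_mul_of_nonneg_right (abs_adjugate_le A ha0 hamax j₀ k) (abs_nonneg _)
    have hfinal : ∑ k, (N.factorial * amax ^ N) * |((A - B).mulVec v) k| < |A.det| * m0 := by
      have hap : (0 : ℝ) < N.factorial * amax ^ N ∨ amax = 0 := by
        rcases eq_or_lt_of_le ha0 with h | h
        · exact Or.inr h.symm
        · exact Or.inl (by positivity)
      rcases hap with hap | hap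
      · calc ∑ k, (N.factorial * amax ^ N) * |((A - B).mulVec v) k|
            < ∑ _k : Fin (N + 1), (N.factorial * amax ^ N) * ((N + 1) * M * m0) :=
              Finset.sum_lt_sum_of_nonempty Finset.univ_nonempty
                (fun k _ => mul_lt_mul_of_pos_left (h2 k) hap)
          _ = (N + 1 : ℝ) * (N + 1).factorial * amax ^ N * M * m0 := by
              rw [Finset.sum_const, Finset.card_univ, Fintype.card_fin, nsmul_eq_mul,
                Nat.factorial_succ]
              push_cast; ring
          _ < |A.det| * m0 := mul_lt_mul_of_pos_right hMlt hm0
      · exfalso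
        have : A = 0 := by
          ext i' j'
          have := hamax i' j'
          rw [hap] at this
          simpa using abs_nonpos_iff.mp this
        rw [this, Matrix.det_zero, abs_zero] at hMlt
        have : (0:ℝ) ≤ (N + 1 : ℝ) * (N + 1).factorial * amax ^ N * M := by positivity
        linarith
    calc |A.det| * m0 = |(A.adjugate.mulVec ((A - B).mulVec v)) j₀| := hleft
      _ ≤ ∑ k, (N.factorial * amax ^ N) * |((A - B).mulVec v) k| := h5
      _ < |A.det| * m0 := hfinal
  exact lt_irrefl _ h4




/-- Existence–uniqueness step of the explicit inverse function theorem: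
with `𝔉` smooth, `A = Jac 𝔉(x₀)` invertible, `W` a bounded convex open set containing `x₀`
on which `det Jac 𝔉` never vanishes and all Jacobian entries stay within
`M < |det A|/(n·n!·amax^{n−1})` of those of `A`, and with
`m = min_{x ∈ ∂W} ‖𝔉(x) − 𝔉(x₀)‖`, every `y` with `‖y − 𝔉(x₀)‖ < m/2` has exactly one
preimage in `W`. -/
theorem stmt12 (n : ℕ)
    (𝔉 : EuclideanSpace ℝ (Fin n) → EuclideanSpace ℝ (Fin n))
    (J : EuclideanSpace ℝ (Fin n) → Matrix (Fin n) (Fin n) ℝ)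
    (W : Set (EuclideanSpace ℝ (Fin n))) (x₀ : EuclideanSpace ℝ (Fin n)) (amax M m : ℝ)
    (hsmooth : ContDiff ℝ (⊤ : ℕ∞) 𝔉)
    (hderiv : ∀ x, HasFDerivAt 𝔉 (Matrix.toEuclideanCLM (𝕜 := ℝ) (J x)) x)
    (hWo : IsOpen W) (hWc : Convex ℝ W) (hWb : Bornology.IsBounded W) (hx₀ : x₀ ∈ W)
    (hA : IsUnit (J x₀))
    (hamax : ∀ i j, |J x₀ i j| ≤ amax) (hattain : ∃ i j, |J x₀ i j| = amax)
    (hM0 : 0 < M)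
    (hM : M < |(J x₀).det| / (n * n.factorial * amax ^ (n - 1)))
    (hdet : ∀ x ∈ W, (J x).det ≠ 0)
    (hclose : ∀ x ∈ W, ∀ i j, |J x i j - J x₀ i j| < M)
    (hm : IsLeast ((fun x => ‖𝔉 x - 𝔉 x₀‖) '' frontier W) m) :
    ∀ y : EuclideanSpace ℝ (Fin n), ‖y - 𝔉 x₀‖ < m / 2 →
      ∃! x, x ∈ W ∧ 𝔉 x = y := by
  
  intro y hy
  cases n with
  | zero =>
    haveI : Subsingleton (EuclideanSpace ℝ (Fin 0)) :=
      ⟨fun a b => by ext i; exact i.elim0⟩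
    exact ⟨x₀, ⟨hx₀, Subsingleton.elim _ _⟩, fun z _ => Subsingleton.elim _ _⟩
  | succ N =>
    -- basic positivity facts
    have hdetA : (J x₀).det ≠ 0 := hdet x₀ hx₀
    have ha0 : 0 ≤ amax := le_trans (abs_nonneg _) (hamax 0 0)
    have hapos : 0 < amax := by
      rcases eq_or_lt_of_le ha0 with h | h
      · exfalso
        apply hdetA
        have hA0 : J x₀ = 0 := by
          ext i' j'
          have := hamax i' j'
          rw [← h] at this
          simpa using abs_nonpos_iff.mp this
        rw [hA0, Matrix.det_zero]
      · exact h
    have hq' : (0:ℝ) < ((N+1 : ℕ) : ℝ) * ((N+1 : ℕ).factorial : ℝ) * amax ^ (N + 1 - 1) := by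
      have : (0:ℝ) < ((N+1 : ℕ) : ℝ) := by positivity
      have h2 : (0:ℝ) < ((N+1 : ℕ).factorial : ℝ) := by
        exact_mod_cast Nat.factorial_pos _
      positivity
    have hMlt : ((N:ℝ) + 1) * ((N + 1).factorial : ℝ) * amax ^ N * M < |(J x₀).det| := by
      have h := (lt_div_iff₀ hq').mp hM
      calc ((N:ℝ) + 1) * ((N + 1).factorial : ℝ) * amax ^ N * M
          = M * (((N+1 : ℕ) : ℝ) * ((N+1 : ℕ).factorial : ℝ) * amax ^ (N + 1 - 1)) := by
            push_cast [Nat.add_sub_cancel]; ring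
        _ < |(J x₀).det| := h
    -- uniqueness via mean value theorem
    have huniq : ∀ x₁, x₁ ∈ W → 𝔉 x₁ = y → ∀ x₂, x₂ ∈ W → 𝔉 x₂ = y → x₂ = x₁ := by
      intro x₁ hx₁ hy₁ x₂ hx₂ hy₂
      set γ : ℝ → EuclideanSpace ℝ (Fin (N+1)) := fun t => x₁ + t • (x₂ - x₁) with hγ
      have hγW : ∀ t ∈ Set.Icc (0:ℝ) 1, γ t ∈ W := by
        intro t ht
        have h1 := hWc hx₁ hx₂ (by linarith [ht.2] : (0:ℝ) ≤ 1 - t) ht.1 (by ring)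
        have h2 : (1 - t) • x₁ + t • x₂ = γ t := by
          rw [hγ]; simp only [smul_sub, sub_smul, one_smul]; abel
        rwa [h2] at h1
      have hγd : ∀ t : ℝ, HasDerivAt γ (x₂ - x₁) t := by
        intro t
        have h1 : HasDerivAt (fun t : ℝ => t • (x₂ - x₁)) (x₂ - x₁) t := by
          simpa using (hasDerivAt_id t).smul_const (x₂ - x₁)
        exact h1.const_add x₁
      have hcomp : ∀ (t : ℝ) (i : Fin (N+1)), HasDerivAt (fun s => 𝔉 (γ s) i)
          (((Matrix.toEuclideanCLM (𝕜:=ℝ) (J (γ t))) (x₂ - x₁)) i) t := by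
        intro t i
        have h2 : HasDerivAt (fun s => 𝔉 (γ s))
            (Matrix.toEuclideanCLM (𝕜:=ℝ) (J (γ t)) (x₂ - x₁)) t :=
          (hderiv (γ t)).comp_hasDerivAt t (hγd t)
        have h3 := ((EuclideanSpace.proj (𝕜:=ℝ) i).hasFDerivAt).comp_hasDerivAt t h2
        exact h3
      have hMVT : ∀ i : Fin (N+1), ∃ c : ℝ, c ∈ Set.Ioo (0:ℝ) 1 ∧
          ((Matrix.toEuclideanCLM (𝕜:=ℝ) (J (γ c))) (x₂ - x₁)) i = 0 := by
        intro i
        obtain ⟨c, hc, hceq⟩ := exists_hasDerivAt_eq_slope (fun s => 𝔉 (γ s) i)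
          (fun s => ((Matrix.toEuclideanCLM (𝕜:=ℝ) (J (γ s))) (x₂ - x₁)) i) one_pos
          (fun s _ => (hcomp s i).continuousAt.continuousWithinAt)
          (fun s _ => hcomp s i)
        refine ⟨c, hc, ?_⟩
        rw [hceq]
        have hγ0 : γ 0 = x₁ := by simp [hγ]
        have hγ1 : γ 1 = x₂ := by rw [hγ]; simp
        rw [hγ0, hγ1, hy₁, hy₂]
        simp
      choose c hc hczero using hMVT
      set B : Matrix (Fin (N+1)) (Fin (N+1)) ℝ :=
        Matrix.of fun i k => J (γ (c i)) i k with hBdef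
      have hcW : ∀ i, γ (c i) ∈ W := fun i => hγW (c i) (Set.mem_Icc_of_Ioo (hc i))
      have hcloseB : ∀ i k, |B i k - J x₀ i k| < M := fun i k => hclose _ (hcW i) i k
      have hvB : B.mulVec (fun k => (x₂ - x₁) k) = 0 := by
        funext i
        have h4 := hczero i
        have hrfl : ((Matrix.toEuclideanCLM (𝕜:=ℝ) (J (γ (c i)))) (x₂ - x₁)) i
            = (J (γ (c i))).mulVec (fun k => (x₂ - x₁) k) i := rfl
        rw [hrfl] at h4
        simpa [hBdef, Matrix.mulVec, dotProduct] using h4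
      have hv0 := mulVec_zero_eq_zero (J x₀) B hamax hM0 hMlt hcloseB _ hvB
      have hsub : x₂ - x₁ = 0 := by
        ext k
        exact congrFun hv0 k
      exact sub_eq_zero.mp hsub
    -- existence via minimization
    have hcont : Continuous 𝔉 := hsmooth.continuous
    have hKc : IsCompact (closure W) :=
      Metric.isCompact_of_isClosed_isBounded isClosed_closure hWb.closure
    obtain ⟨x', hxK, hmin⟩ := hKc.exists_isMinOn ⟨x₀, subset_closure hx₀⟩
      (((hcont.sub continuous_const).norm).continuousOn :
        ContinuousOn (fun x => ‖𝔉 x - y‖) (closure W))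
    have hminle : ∀ x ∈ closure W, ‖𝔉 x' - y‖ ≤ ‖𝔉 x - y‖ := fun x hx =>
      (isMinOn_iff.mp hmin) x hx
    have hxW : x' ∈ W := by
      by_contra hxW
      have hfront : x' ∈ frontier W := by
        rw [hWo.frontier_eq]
        exact ⟨hxK, hxW⟩
      have h1 : m ≤ ‖𝔉 x' - 𝔉 x₀‖ := hm.2 ⟨x', hfront, rfl⟩
      have h2 : ‖𝔉 x' - y‖ ≤ ‖𝔉 x₀ - y‖ := hminle x₀ (subset_closure hx₀)
      have h3 : ‖𝔉 x' - 𝔉 x₀‖ ≤ ‖𝔉 x' - y‖ + ‖y - 𝔉 x₀‖ := by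
        have := dist_triangle (𝔉 x') y (𝔉 x₀)
        simpa [dist_eq_norm] using this
      have h4 : ‖𝔉 x₀ - y‖ = ‖y - 𝔉 x₀‖ := norm_sub_rev _ _
      linarith
    -- first-order condition
    have hnhds : closure W ∈ nhds x' := Filter.mem_of_superset (hWo.mem_nhds hxW) subset_closure
    have hloc : IsLocalMin (fun x => (inner ℝ (𝔉 x - y) (𝔉 x - y) : ℝ)) x' := by
      have hlocψ : IsLocalMin (fun x => ‖𝔉 x - y‖) x' := hmin.isLocalMin hnhds
      refine Filter.Eventually.mono hlocψ fun x hx => ?_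
      simp only
      rw [real_inner_self_eq_norm_sq, real_inner_self_eq_norm_sq]
      exact pow_le_pow_left₀ (norm_nonneg _) hx 2
    have hf : HasFDerivAt (fun x => 𝔉 x - y) (Matrix.toEuclideanCLM (𝕜:=ℝ) (J x')) x' :=
      (hderiv x').sub_const y
    have hinner := HasFDerivAt.inner (𝕜 := ℝ) hf hf
    have hD := hloc.hasFDerivAt_eq_zero hinner
    have hzero : ∀ v, (inner ℝ (𝔉 x' - y) (Matrix.toEuclideanCLM (𝕜:=ℝ) (J x') v) : ℝ) = 0 := by
      intro v
      have h5 := congrFun (congrArg DFunLike.coe hD) v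
      simp only [ContinuousLinearMap.coe_comp', Function.comp_apply, fderivInnerCLM_apply,
        ContinuousLinearMap.prod_apply, ContinuousLinearMap.zero_apply] at h5
      rw [real_inner_comm (𝔉 x' - y) (Matrix.toEuclideanCLM (𝕜:=ℝ) (J x') v)] at h5
      linarith
    have hdetx : IsUnit (J x').det := isUnit_iff_ne_zero.mpr (hdet x' hxW)
    have hJinv : J x' * (J x')⁻¹ = 1 := Matrix.mul_nonsing_inv _ hdetx
    have hsurj : Matrix.toEuclideanCLM (𝕜:=ℝ) (J x')
        (Matrix.toEuclideanCLM (𝕜:=ℝ) ((J x')⁻¹) (𝔉 x' - y)) = 𝔉 x' - y := by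
      rw [← ContinuousLinearMap.mul_apply, ← map_mul, hJinv, map_one,
        ContinuousLinearMap.one_apply]
    have h6 := hzero (Matrix.toEuclideanCLM (𝕜:=ℝ) ((J x')⁻¹) (𝔉 x' - y))
    rw [hsurj] at h6
    have hFx : 𝔉 x' = y := sub_eq_zero.mp (inner_self_eq_zero.mp h6)
    exact ⟨x', ⟨hxW, hFx⟩, fun z hz => huniq x' hxW hFx z hz.1 hz.2⟩
end

section
/- Under the hypotheses of the explicit inverse function theorem (𝔉 smooth, A = Jac 𝔉(x₀) invertible, W bounded convex open with x₀ ∈ W, det Jac 𝔉 nonvanishing on W, and all entries of Jac 𝔉(x) within M < |det A|/(n·n!·a_max^{n−1}) of the corresponding entries of A on W; V the open ball of radius m/2 about 𝔉(x₀) where m = min_{x∈∂W}‖𝔉(x)−𝔉(x₀)‖), the inverse map 𝔉⁻¹ is well-defined and Lipschitz continuous on V with Lipschitz constant n!·a_max^{n−1}/(|det A| − n·M·n!·a_max^{n−1}). -/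
open Matrix Finset Equiv

section helpers

private lemma le_of_sq_le_sqR {a c : ℝ} (ha : 0 ≤ a) (hc : 0 ≤ c) (h : a ^ 2 ≤ c ^ 2) :
    a ≤ c := by nlinarith

private lemma eucl_sq_norm (n : ℕ) (x : EuclideanSpace ℝ (Fin n)) : ‖x‖ ^ 2 = ∑ i, x i ^ 2 := by
  rw [EuclideanSpace.norm_eq, Real.sq_sqrt (by positivity)]
  simp [sq_abs]

private lemma opbd (n : ℕ) (B : Matrix (Fin n) (Fin n) ℝ) (b : ℝ) (hb : 0 ≤ b)
    (h : ∀ i j, |B i j| ≤ b) (v : EuclideanSpace ℝ (Fin n)) :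
    ‖Matrix.toEuclideanCLM (𝕜 := ℝ) B v‖ ≤ n * b * ‖v‖ := by
  set w := Matrix.toEuclideanCLM (𝕜 := ℝ) B v with hw
  have hwi : ∀ i, w i = ∑ j, B i j * v j := fun i => rfl
  have hS : (∑ j, |v j|) ^ 2 ≤ n * ∑ j, |v j| ^ 2 := by
    simpa using sq_sum_le_card_mul_sum_sq (s := Finset.univ) (f := fun j => |v j|)
  have hv2 : (∑ j, |v j| ^ 2) = ‖v‖ ^ 2 := by rw [eucl_sq_norm]; simp [sq_abs]
  have hwb : ∀ i, |w i| ≤ b * ∑ j, |v j| := by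
    intro i
    rw [hwi]
    calc |∑ j, B i j * v j| ≤ ∑ j, |B i j * v j| := Finset.abs_sum_le_sum_abs _ _
      _ ≤ ∑ j, b * |v j| := Finset.sum_le_sum fun j _ => by
          rw [abs_mul]; exact mul_le_mul_of_nonneg_right (h i j) (abs_nonneg _)
      _ = b * ∑ j, |v j| := by rw [Finset.mul_sum]
  refine le_of_sq_le_sqR (norm_nonneg _) (by positivity) ?_
  rw [eucl_sq_norm]
  calc ∑ i, w i ^ 2 ≤ ∑ i : Fin n, (b * ∑ j, |v j|) ^ 2 := by
        refine Finset.sum_le_sum fun i _ => ?_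
        have h1 := hwb i
        nlinarith [abs_nonneg (w i), sq_abs (w i)]
    _ = n * (b ^ 2 * (∑ j, |v j|) ^ 2) := by
        rw [Finset.sum_const, Finset.card_univ, Fintype.card_fin, nsmul_eq_mul]; ring
    _ ≤ n * (b ^ 2 * (n * ‖v‖ ^ 2)) := by
        have h2 : (∑ j, |v j|) ^ 2 ≤ n * ‖v‖ ^ 2 := by rw [← hv2]; exact hS
        gcongr
    _ = (n * b * ‖v‖) ^ 2 := by ring

private lemma card_perm_fixed (n : ℕ) (i j : Fin (n+1)) :
    Fintype.card {σ : Perm (Fin (n+1)) // σ i = j} = n.factorial := by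
  have e1 : {σ : Perm (Fin (n+1)) // σ i = j} ≃ {σ : Perm (Fin (n+1)) // σ 0 = j} :=
    (Equiv.mulRight (Equiv.swap 0 i)).subtypeEquiv (fun σ => by
      simp [Equiv.Perm.mul_apply, Equiv.swap_apply_left])
  have e2 : {σ : Perm (Fin (n+1)) // σ 0 = j} ≃
      {pq : Fin (n+1) × Perm (Fin n) // pq.1 = j} :=
    Equiv.Perm.decomposeFin.subtypeEquiv (fun σ => by
      have h : (Equiv.Perm.decomposeFin σ).1 = σ 0 := by
        conv_rhs => rw [← Equiv.Perm.decomposeFin.symm_apply_apply σ]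
        rw [← Equiv.Perm.decomposeFin_symm_apply_zero
          (Equiv.Perm.decomposeFin σ).1 (Equiv.Perm.decomposeFin σ).2]
      rw [h])
  have e3 : {pq : Fin (n+1) × Perm (Fin n) // pq.1 = j} ≃ Perm (Fin n) :=
    { toFun := fun x => x.1.2
      invFun := fun e => ⟨(j, e), rfl⟩
      left_inv := fun x => by
        rcases x with ⟨⟨p, e⟩, h⟩
        simp at h
        subst h
        rfl
      right_inv := fun e => rfl }
  rw [Fintype.card_congr ((e1.trans e2).trans e3), Fintype.card_perm, Fintype.card_fin]

private lemma adjbd (n : ℕ) (A : Matrix (Fin (n+1)) (Fin (n+1)) ℝ) (b : ℝ) (hb : 0 ≤ b)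
    (h : ∀ i j, |A i j| ≤ b) (i j : Fin (n+1)) :
    |A.adjugate i j| ≤ n.factorial * b ^ n := by
  set B := A.updateRow j (Pi.single i 1) with hB
  have hBval : ∀ k l, B k l = if k = j then (Pi.single i 1 : Fin (n+1) → ℝ) l else A k l := by
    intro k l; rw [hB, Matrix.updateRow_apply]
  rw [Matrix.adjugate_apply, Matrix.det_apply']
  calc |∑ σ : Perm (Fin (n+1)), Equiv.Perm.sign σ * ∏ l, B (σ l) l|
      ≤ ∑ σ : Perm (Fin (n+1)), |(Equiv.Perm.sign σ : ℝ) * ∏ l, B (σ l) l| :=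
        Finset.abs_sum_le_sum_abs _ _
    _ ≤ ∑ σ : Perm (Fin (n+1)), if σ i = j then b ^ n else 0 := by
        refine Finset.sum_le_sum fun σ _ => ?_
        rw [abs_mul]
        have hsign : |((Equiv.Perm.sign σ : ℤ) : ℝ)| = 1 := by
          rcases Int.units_eq_one_or (Equiv.Perm.sign σ) with hs | hs <;> simp [hs]
        rw [hsign, one_mul]
        by_cases hσ : σ i = j
        · simp only [hσ, if_true]
          rw [abs_prod]
          rw [← Finset.mul_prod_erase Finset.univ (fun l => |B (σ l) l|) (Finset.mem_univ i)]
          have h1 : |B (σ i) i| = 1 := by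
            rw [hσ, hBval, if_pos rfl, Pi.single_eq_same, abs_one]
          rw [h1, one_mul]
          calc ∏ l ∈ Finset.univ.erase i, |B (σ l) l|
              ≤ ∏ _l ∈ Finset.univ.erase i, b := by
                refine Finset.prod_le_prod (fun l _ => abs_nonneg _) (fun l hl => ?_)
                have hli : l ≠ i := Finset.ne_of_mem_erase hl
                have hσl : σ l ≠ j := fun hc => hli (σ.injective (hc.trans hσ.symm))
                rw [hBval, if_neg hσl]
                exact h _ _
            _ = b ^ n := by
                rw [Finset.prod_const, Finset.card_erase_of_mem (Finset.mem_univ i)]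
                simp
        · simp only [hσ, if_false]
          have h0 : B (σ (σ⁻¹ j)) (σ⁻¹ j) = 0 := by
            rw [show σ (σ⁻¹ j) = j from σ.apply_symm_apply j, hBval]
            simp only [if_pos rfl]
            have : σ⁻¹ j ≠ i := fun hc => hσ (by rw [← hc]; exact σ.apply_symm_apply j)
            exact Pi.single_eq_of_ne this 1
          rw [abs_prod]
          rw [le_iff_eq_or_lt]
          left
          exact Finset.prod_eq_zero (Finset.mem_univ (σ⁻¹ j)) (by rw [h0, abs_zero])
    _ = (Finset.univ.filter (fun σ : Perm (Fin (n+1)) => σ i = j)).card * b ^ n := by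
        rw [← Finset.sum_filter, Finset.sum_const, nsmul_eq_mul]
    _ = n.factorial * b ^ n := by
        rw [← Fintype.card_subtype, card_perm_fixed]

private lemma inv_bound (n : ℕ) (A : Matrix (Fin (n+1)) (Fin (n+1)) ℝ) (amax : ℝ)
    (ha : 0 ≤ amax) (h : ∀ i j, |A i j| ≤ amax) (u : EuclideanSpace ℝ (Fin (n+1))) :
    |A.det| * ‖u‖ ≤ (n+1).factorial * amax ^ n * ‖Matrix.toEuclideanCLM (𝕜 := ℝ) A u‖ := by
  have hadj : Matrix.toEuclideanCLM (𝕜 := ℝ) A.adjugate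
      (Matrix.toEuclideanCLM (𝕜 := ℝ) A u) = A.det • u := by
    rw [← ContinuousLinearMap.comp_apply, ← ContinuousLinearMap.mul_def,
      ← _root_.map_mul (Matrix.toEuclideanCLM (𝕜 := ℝ)),
      Matrix.adjugate_mul, _root_.map_smul (Matrix.toEuclideanCLM (𝕜 := ℝ)),
      _root_.map_one (Matrix.toEuclideanCLM (𝕜 := ℝ))]
    rfl
  have h1 : ‖(A.det • u : EuclideanSpace ℝ (Fin (n+1)))‖ = |A.det| * ‖u‖ := by
    rw [norm_smul, Real.norm_eq_abs]
  calc |A.det| * ‖u‖ = ‖Matrix.toEuclideanCLM (𝕜 := ℝ) A.adjugate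
        (Matrix.toEuclideanCLM (𝕜 := ℝ) A u)‖ := by rw [hadj, h1]
    _ ≤ ((n+1 : ℕ)) * (n.factorial * amax ^ n) * ‖Matrix.toEuclideanCLM (𝕜 := ℝ) A u‖ :=
        opbd _ _ _ (by positivity) (adjbd n A amax ha h) _
    _ = (n+1).factorial * amax ^ n * ‖Matrix.toEuclideanCLM (𝕜 := ℝ) A u‖ := by
        rw [Nat.factorial_succ]; push_cast; ring

end helpers



/-- Under the hypotheses of the explicit inverse function theorem, the
inverse of `𝔉` is well-defined on the ball `V` of radius `m/2` about `𝔉(x₀)` (each `y ∈ V`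
has a unique preimage in `W`) and is Lipschitz there with constant
`n!·amax^{n−1}/(|det A| − n·M·n!·amax^{n−1})`. -/
theorem stmt13 (n : ℕ)
    (𝔉 : EuclideanSpace ℝ (Fin n) → EuclideanSpace ℝ (Fin n))
    (J : EuclideanSpace ℝ (Fin n) → Matrix (Fin n) (Fin n) ℝ)
    (W : Set (EuclideanSpace ℝ (Fin n))) (x₀ : EuclideanSpace ℝ (Fin n)) (amax M m : ℝ)
    (hsmooth : ContDiff ℝ (⊤ : ℕ∞) 𝔉)
    (hderiv : ∀ x, HasFDerivAt 𝔉 (Matrix.toEuclideanCLM (𝕜 := ℝ) (J x)) x)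
    (hWo : IsOpen W) (hWc : Convex ℝ W) (hWb : Bornology.IsBounded W) (hx₀ : x₀ ∈ W)
    (hA : IsUnit (J x₀))
    (hamax : ∀ i j, |J x₀ i j| ≤ amax) (hattain : ∃ i j, |J x₀ i j| = amax)
    (hM0 : 0 < M)
    (hM : M < |(J x₀).det| / (n * n.factorial * amax ^ (n - 1)))
    (hdet : ∀ x ∈ W, (J x).det ≠ 0)
    (hclose : ∀ x ∈ W, ∀ i j, |J x i j - J x₀ i j| < M)
    (hm : IsLeast ((fun x => ‖𝔉 x - 𝔉 x₀‖) '' frontier W) m) :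
    (∀ y ∈ Metric.ball (𝔉 x₀) (m / 2), ∃! x, x ∈ W ∧ 𝔉 x = y) ∧
      ∀ x₁ ∈ W, ∀ x₂ ∈ W,
        𝔉 x₁ ∈ Metric.ball (𝔉 x₀) (m / 2) → 𝔉 x₂ ∈ Metric.ball (𝔉 x₀) (m / 2) →
          ‖x₁ - x₂‖ ≤ (n.factorial * amax ^ (n - 1) /
              (|(J x₀).det| - n * M * n.factorial * amax ^ (n - 1))) * ‖𝔉 x₁ - 𝔉 x₂‖ := by
  obtain ⟨i₀, j₀, hij₀⟩ := hattain
  have hn0 : n ≠ 0 := fun h => (h ▸ i₀).elim0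
  obtain ⟨p, rfl⟩ : ∃ p, n = p + 1 := ⟨n - 1, by omega⟩
  simp only [Nat.add_sub_cancel] at hM ⊢
  set A := J x₀ with hAdef
  have hamax0 : 0 ≤ amax := (abs_nonneg _).trans (hamax i₀ j₀)
  have hdetA : A.det ≠ 0 := by
    have := (Matrix.isUnit_iff_isUnit_det A).mp hA
    exact IsUnit.ne_zero this
  have hD : 0 < |A.det| := abs_pos.mpr hdetA
  have hamaxpos : 0 < amax := by
    rcases hamax0.eq_or_lt with h | h
    · exfalso
      apply hdetA
      have hA0 : A = 0 := by
        ext i j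
        have h2 := hamax i j
        rw [← h] at h2
        simpa using abs_nonpos_iff.mp h2
      rw [hA0]
      exact Matrix.det_zero
    · exact h
  set c : ℝ := (p+1).factorial * amax ^ p with hcdef
  have hc : 0 < c := by positivity
  have hdenom : 0 < |A.det| - (p+1 : ℕ) * M * c := by
    have hdpos : (0:ℝ) < (p+1 : ℕ) * (p+1).factorial * amax ^ p := by positivity
    have := (lt_div_iff₀ hdpos).mp hM
    rw [hcdef]
    push_cast at this ⊢
    nlinarith
  -- operator norm bound on J x - A
  have hJA : ∀ x ∈ W, ‖Matrix.toEuclideanCLM (𝕜 := ℝ) (J x) -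
      Matrix.toEuclideanCLM (𝕜 := ℝ) A‖ ≤ (p+1 : ℕ) * M := by
    intro x hx
    refine ContinuousLinearMap.opNorm_le_bound _ (by positivity) fun v => ?_
    rw [← _root_.map_sub (Matrix.toEuclideanCLM (𝕜 := ℝ) (n := Fin (p+1))) (J x) A]
    exact opbd _ _ _ hM0.le (fun i j => (hclose x hx i j).le) v
  -- key Lipschitz-type estimate on W
  have key : ∀ x₁ ∈ W, ∀ x₂ ∈ W, ‖x₁ - x₂‖ ≤
      (c / (|A.det| - (p+1 : ℕ) * M * c)) * ‖𝔉 x₁ - 𝔉 x₂‖ := by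
    intro x₁ h₁ x₂ h₂
    have hmvt : ‖𝔉 x₁ - 𝔉 x₂ - Matrix.toEuclideanCLM (𝕜 := ℝ) A (x₁ - x₂)‖ ≤
        ((p+1 : ℕ) * M) * ‖x₁ - x₂‖ :=
      Convex.norm_image_sub_le_of_norm_hasFDerivWithin_le'
        (fun x hx => (hderiv x).hasFDerivWithinAt) hJA hWc h₂ h₁
    have hib := inv_bound p A amax hamax0 hamax (x₁ - x₂)
    have h3 : ‖Matrix.toEuclideanCLM (𝕜 := ℝ) A (x₁ - x₂)‖ ≤
        ‖𝔉 x₁ - 𝔉 x₂‖ + ((p+1 : ℕ) * M) * ‖x₁ - x₂‖ := by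
      have h4 := norm_sub_le (𝔉 x₁ - 𝔉 x₂)
        (𝔉 x₁ - 𝔉 x₂ - Matrix.toEuclideanCLM (𝕜 := ℝ) A (x₁ - x₂))
      simp only [sub_sub_cancel] at h4
      linarith
    rw [div_mul_eq_mul_div, le_div_iff₀ hdenom]
    have hcc : (p+1).factorial * amax ^ p = c := rfl
    rw [hcc] at hib
    nlinarith [norm_nonneg (x₁ - x₂), norm_nonneg (𝔉 x₁ - 𝔉 x₂)]
  constructor
  · -- existence and uniqueness
    intro y hy
    have huniq : ∀ x x', x ∈ W → x' ∈ W → 𝔉 x = y → 𝔉 x' = y → x = x' := by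
      intro x x' hx hx' hfx hfx'
      have := key x hx x' hx'
      rw [hfx, hfx', sub_self, norm_zero, mul_zero] at this
      have h5 : x - x' = 0 := by
        rw [← norm_le_zero_iff]
        exact this
      exact sub_eq_zero.mp h5
    -- existence via минимизация
    have hKc : IsCompact (closure W) := hWb.isCompact_closure
    have hnec : (closure W).Nonempty := ⟨x₀, subset_closure hx₀⟩
    have hcont : ContinuousOn (fun x => ‖𝔉 x - y‖) (closure W) :=
      ((hsmooth.continuous.sub continuous_const).norm).continuousOn
    obtain ⟨z, hzcl, hzmin⟩ := hKc.exists_isMinOn hnec hcont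
    have hy' : ‖𝔉 x₀ - y‖ < m / 2 := by
      have := Metric.mem_ball.mp hy
      rw [dist_eq_norm] at this
      rw [← norm_neg]
      simpa [neg_sub] using this
    have hzW : z ∈ W := by
      by_contra hzW
      have hzf : z ∈ frontier W := by
        rw [hWo.frontier_eq]
        exact ⟨hzcl, hzW⟩
      have h5 : m ≤ ‖𝔉 z - 𝔉 x₀‖ := hm.2 ⟨z, hzf, rfl⟩
      have h7 : ‖𝔉 z - y‖ ≤ ‖𝔉 x₀ - y‖ := hzmin (subset_closure hx₀)
      have h8 : ‖𝔉 z - 𝔉 x₀‖ ≤ ‖𝔉 z - y‖ + ‖y - 𝔉 x₀‖ :=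
        norm_sub_le_norm_sub_add_norm_sub _ _ _
      have h9 : ‖y - 𝔉 x₀‖ = ‖𝔉 x₀ - y‖ := norm_sub_rev _ _
      linarith
    -- first order condition
    have hminOn : IsMinOn (fun x => (inner ℝ (𝔉 x - y) (𝔉 x - y) : ℝ)) W z := by
      intro x hx
      have h5 : ‖𝔉 z - y‖ ≤ ‖𝔉 x - y‖ := hzmin (subset_closure hx)
      simp only [Set.mem_setOf_eq, real_inner_self_eq_norm_sq]
      exact pow_le_pow_left₀ (norm_nonneg _) h5 2
    have hlocal : IsLocalMin (fun x => (inner ℝ (𝔉 x - y) (𝔉 x - y) : ℝ)) z :=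
      hminOn.isLocalMin (hWo.mem_nhds hzW)
    have hF : HasFDerivAt (fun x => 𝔉 x - y) (Matrix.toEuclideanCLM (𝕜 := ℝ) (J z)) z :=
      (hderiv z).sub_const y
    have hg2 := (hF.inner ℝ hF)
    have hzero := hlocal.hasFDerivAt_eq_zero hg2
    -- invert J z
    have hdetz : (J z).det ≠ 0 := hdet z hzW
    have hFz : 𝔉 z = y := by
      set w := 𝔉 z - y with hwdef
      have hv : Matrix.toEuclideanCLM (𝕜 := ℝ) (J z)
          (Matrix.toEuclideanCLM (𝕜 := ℝ) (J z)⁻¹ w) = w := by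
        rw [← ContinuousLinearMap.comp_apply, ← ContinuousLinearMap.mul_def,
          ← _root_.map_mul (Matrix.toEuclideanCLM (𝕜 := ℝ)),
          Matrix.mul_nonsing_inv _ (isUnit_iff_ne_zero.mpr hdetz), _root_.map_one (Matrix.toEuclideanCLM (𝕜 := ℝ))]
        rfl
      have happ := congrFun (congrArg DFunLike.coe hzero)
        (Matrix.toEuclideanCLM (𝕜 := ℝ) (J z)⁻¹ w)
      rw [ContinuousLinearMap.zero_apply, ContinuousLinearMap.comp_apply,
        ContinuousLinearMap.prod_apply, fderivInnerCLM_apply] at happ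
      simp only [hv] at happ
      have hww : (inner ℝ w w : ℝ) = 0 := by linarith [happ.symm]
      have := inner_self_eq_zero.mp hww
      rw [hwdef, sub_eq_zero] at this
      exact this
    exact ⟨z, ⟨hzW, hFz⟩, fun x' hx' => huniq x' z hx'.1 hzW hx'.2 hFz⟩
  · intro x₁ hx₁ x₂ hx₂ _ _
    have := key x₁ hx₁ x₂ hx₂
    convert this using 3
    push_cast
    ring
end
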